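/- arXiv:math/0412107 — 11 statements merged into one kernel-verified Lean document; each statement's English description precedes it below -/
import Mathlib

section
/- Let H be a complex Hilbert space, let I be a nonempty directed index set (for instance ℝ≥0 with its order, t → ∞), and let (x_t)_{t ∈ I} be a net of unitary operators on H converging to an operator x in the strong operator topology (i.e. x_t ξ → x ξ in norm for every ξ ∈ H). Then a vector ξ ∈ H lies in the range of x if and only if the net (x_t* ξ) is convergent in norm. -/
open Filter

/-- Let `H` be a complex Hilbert space, `(x t)` a net of unitaries on `H` indexed by a
nonempty directed set, converging strongly to an operator `X`. Then `ξ` lies in the range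
of `X` iff the net `(x t)* ξ` converges in norm. -/
theorem range_mem_iff_adjoint_net_converges
    {H : Type*} [NormedAddCommGroup H] [InnerProductSpace ℂ H] [CompleteSpace H]
    {ι : Type*} [Nonempty ι] [SemilatticeSup ι]
    (x : ι → H →L[ℂ] H) (hx : ∀ t, x t ∈ unitary (H →L[ℂ] H))
    (X : H →L[ℂ] H)
    (hconv : ∀ ξ : H, Tendsto (fun t => x t ξ) atTop (nhds (X ξ)))
    (ξ : H) :
    ξ ∈ Set.range X ↔
      ∃ l : H, Tendsto (fun t => ContinuousLinearMap.adjoint (x t) ξ) atTop (nhds l) := by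
  have hadj : ∀ t, ContinuousLinearMap.adjoint (x t) ∈ unitary (H →L[ℂ] H) := by
    intro t
    rw [← ContinuousLinearMap.star_eq_adjoint]
    exact Unitary.star_mem (hx t)
  have hinv : ∀ t (v : H), ContinuousLinearMap.adjoint (x t) (x t v) = v := by
    intro t v
    have h1 := (Unitary.mem_iff.mp (hx t)).1
    rw [ContinuousLinearMap.star_eq_adjoint] at h1
    calc ContinuousLinearMap.adjoint (x t) (x t v)
        = (ContinuousLinearMap.adjoint (x t) * x t) v := rfl
      _ = v := by rw [h1]; rfl
  have hinv' : ∀ t (v : H), x t (ContinuousLinearMap.adjoint (x t) v) = v := by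
    intro t v
    have h1 := (Unitary.mem_iff.mp (hx t)).2
    rw [ContinuousLinearMap.star_eq_adjoint] at h1
    calc x t (ContinuousLinearMap.adjoint (x t) v)
        = (x t * ContinuousLinearMap.adjoint (x t)) v := rfl
      _ = v := by rw [h1]; rfl
  constructor
  · rintro ⟨η, rfl⟩
    refine ⟨η, ?_⟩
    rw [tendsto_iff_norm_sub_tendsto_zero]
    have key : ∀ t, ‖ContinuousLinearMap.adjoint (x t) (X η) - η‖ = ‖X η - x t η‖ := by
      intro t
      have e : ContinuousLinearMap.adjoint (x t) (X η) - η
          = ContinuousLinearMap.adjoint (x t) (X η - x t η) := by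
        rw [map_sub, hinv]
      rw [e]
      exact (ContinuousLinearMap.adjoint (x t)).norm_map_of_mem_unitary (hadj t) _
    simp only [key]
    have := (hconv η).sub_const (X η)
    rw [sub_self] at this
    have h2 := this.norm
    simpa [norm_sub_rev] using h2
  · rintro ⟨l, hl⟩
    refine ⟨l, ?_⟩
    have h1 : Tendsto (fun t => x t l) atTop (nhds ξ) := by
      rw [tendsto_iff_norm_sub_tendsto_zero]
      have key : ∀ t, ‖x t l - ξ‖ = ‖l - ContinuousLinearMap.adjoint (x t) ξ‖ := by
        intro t
        have e : x t l - ξ = x t (l - ContinuousLinearMap.adjoint (x t) ξ) := by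
          rw [map_sub, hinv']
        rw [e]
        exact (x t).norm_map_of_mem_unitary (hx t) _
      simp only [key]
      have := (hl.const_sub l).norm
      simpa using this
    exact tendsto_nhds_unique (hconv l) h1
end

section
/- Let H be a complex Hilbert space and T : H → H a contraction (a continuous linear operator with ‖T‖ ≤ 1). With D = √(1 − T*T) and D₊ = √(1 − T T*) the defect operators (positive square roots of the positive operators 1 − T*T and 1 − T T*), one has the intertwining relations T D = D₊ T and T* D₊ = D T*. -/
open ContinuousLinearMap

section Helpers

variable {A : Type*} [CStarAlgebra A]

lemma my_commute_of_mem_elemental {a s u : A} (hsa : Commute s a) (ha : IsSelfAdjoint a)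
    (hu : u ∈ StarAlgebra.elemental ℂ a) : Commute s u := by
  refine StarAlgebra.elemental.induction_on (R := ℂ) (P := fun u _ => Commute s u) hu hsa ?_ ?_ ?_ ?_ ?_
  · show Commute s (star a); rwa [ha.star_eq]
  · exact fun r => (Algebra.commutes r s).symm
  · exact fun u _ v _ hu hv => hu.add_right hv
  · exact fun u _ v _ hu hv => hu.mul_right hv
  · intro t ht hP v hv
    have hcl : IsClosed {x : A | Commute s x} :=
      isClosed_eq (continuous_mul_left s) (continuous_mul_right s)
    exact closure_minimal (fun x hx => hP x hx) hcl hv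

lemma my_cfc_real_mem_elemental (a : A) (ha : IsSelfAdjoint a) (f : ℝ → ℝ) :
    cfc f a ∈ StarAlgebra.elemental ℂ a := by
  rw [cfc_real_eq_complex f ha]
  refine cfc_cases (· ∈ StarAlgebra.elemental ℂ a) a _ (zero_mem _) fun hf hna => ?_
  rw [cfcHom_eq_of_isStarNormal (ha := hna)]
  simpa using SetLike.coe_mem _

variable [PartialOrder A] [StarOrderedRing A]

lemma my_commute_sqrt {a d s : A} (hd : 0 ≤ d) (hd2 : d * d = a) (hs : Commute s a) :
    Commute s d := by
  have ha : 0 ≤ a := by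
    rw [← hd2]
    nth_rewrite 1 [← (IsSelfAdjoint.of_nonneg hd).star_eq]
    exact star_mul_self_nonneg d
  have hsa : IsSelfAdjoint a := .of_nonneg ha
  have hd' : (0 : A) ≤ cfc Real.sqrt a := cfc_nonneg fun x _ => Real.sqrt_nonneg x
  have hd'2 : cfc Real.sqrt a * cfc Real.sqrt a = a := by
    rw [← cfc_mul Real.sqrt Real.sqrt a]
    conv_rhs => rw [← cfc_id ℝ a]
    exact cfc_congr fun x hx => Real.mul_self_sqrt (spectrum_nonneg_of_nonneg ha hx)
  have hdd : d = cfc Real.sqrt a := by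
    rw [← CFC.sqrt_unique hd2 hd, ← CFC.sqrt_unique hd'2 hd']
  rw [hdd]
  exact my_commute_of_mem_elemental hs hsa (my_cfc_real_mem_elemental a hsa _)

end Helpers


/-- For a contraction `T` on a complex Hilbert space, with defect operators
`D = √(1 - T*T)` and `D₊ = √(1 - T T*)` (characterized as the positive operators whose
squares are `1 - T*T` and `1 - T T*`), one has `T D = D₊ T` and `T* D₊ = D T*`. -/
theorem contraction_defect_intertwine
    {H : Type*} [NormedAddCommGroup H] [InnerProductSpace ℂ H] [CompleteSpace H]
    (T D Dp : H →L[ℂ] H) (hT : ‖T‖ ≤ 1)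
    (hD : D.IsPositive) (hD2 : D ∘L D = 1 - adjoint T ∘L T)
    (hDp : Dp.IsPositive) (hDp2 : Dp ∘L Dp = 1 - T ∘L adjoint T) :
    T ∘L D = Dp ∘L T ∧ adjoint T ∘L Dp = D ∘L adjoint T := by
  have key : T ∘L D = Dp ∘L T := by
    -- the intertwining at the level of squares
    have hsq : T ∘L (1 - adjoint T ∘L T) = (1 - T ∘L adjoint T) ∘L T := by
      have : T * (1 - adjoint T * T) = (1 - T * adjoint T) * T := by noncomm_ring
      simpa [mul_def] using this
    -- block operators on `K = H ⊕₂ H`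
    set K := WithLp 2 (H × H) with hK
    let e : K ≃L[ℂ] H × H := WithLp.prodContinuousLinearEquiv 2 ℂ H H
    let lift : ((H × H) →L[ℂ] (H × H)) → (K →L[ℂ] K) := fun u =>
      (e.symm : (H × H) →L[ℂ] K) ∘L u ∘L (e : K →L[ℂ] (H × H))
    have lift_mul : ∀ u v, lift u ∘L lift v = lift (u ∘L v) := by
      intro u v
      ext z
      simp [lift]
    let S₀ : (H × H) →L[ℂ] (H × H) :=
      ContinuousLinearMap.prod 0 (T ∘L ContinuousLinearMap.fst ℂ H H)
    let M₀ : (H × H) →L[ℂ] (H × H) := D.prodMap Dp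
    let a₀ : (H × H) →L[ℂ] (H × H) :=
      (1 - adjoint T ∘L T).prodMap (1 - T ∘L adjoint T)
    have pm : ∀ (f g : H →L[ℂ] H) (z : H × H), (f.prodMap g) z = (f z.1, g z.2) :=
      fun _ _ _ => rfl
    have sp : ∀ z : H × H, S₀ z = (0, T z.1) := fun _ => rfl
    have hM0 : M₀ ∘L M₀ = a₀ := by
      refine ContinuousLinearMap.ext fun z => ?_
      simp only [M₀, a₀, comp_apply, pm]
      rw [← comp_apply D D, hD2, ← comp_apply Dp Dp, hDp2]
    have hSa : S₀ ∘L a₀ = a₀ ∘L S₀ := by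
      refine ContinuousLinearMap.ext fun z => ?_
      simp only [a₀, comp_apply, pm, sp]
      rw [← comp_apply T, hsq]
      simp
    -- positivity of the diagonal block operator
    have hDin : ∀ x y : H, (inner ℂ (D x) y : ℂ) = inner ℂ x (D y) := fun x y => by
      conv_lhs => rw [← hD.isSelfAdjoint.adjoint_eq]
      exact adjoint_inner_left D y x
    have hDpin : ∀ x y : H, (inner ℂ (Dp x) y : ℂ) = inner ℂ x (Dp y) := fun x y => by
      conv_lhs => rw [← hDp.isSelfAdjoint.adjoint_eq]
      exact adjoint_inner_left Dp y x
    have lmfst : ∀ z : K, (lift M₀ z).1.1 = D z.1.1 := fun _ => rfl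
    have lmsnd : ∀ z : K, (lift M₀ z).1.2 = Dp z.1.2 := fun _ => rfl
    have hMpos : (0 : K →L[ℂ] K) ≤ lift M₀ := by
      rw [nonneg_iff_isPositive]
      constructor
      · intro z w
        show (inner ℂ (lift M₀ z) w : ℂ) = inner ℂ z (lift M₀ w)
        rw [WithLp.prod_inner_apply, WithLp.prod_inner_apply, lmfst, lmsnd, lmfst, lmsnd,
          hDin, hDpin]
      · intro z
        rw [reApplyInnerSelf_apply]
        show (0 : ℝ) ≤ RCLike.re (inner ℂ (lift M₀ z) z : ℂ)
        rw [WithLp.prod_inner_apply, lmfst, lmsnd, map_add]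
        have h1 := hD.2 z.1.1
        have h2 := hDp.2 z.1.2
        rw [reApplyInnerSelf_apply] at h1 h2
        exact add_nonneg h1 h2
    -- the commutation relation for the square roots
    have hcomm : Commute (lift S₀) (lift M₀) := by
      refine my_commute_sqrt (a := lift a₀) hMpos ?_ ?_
      · show lift M₀ ∘L lift M₀ = lift a₀
        rw [lift_mul, hM0]
      · show lift S₀ ∘L lift a₀ = lift a₀ ∘L lift S₀
        rw [lift_mul, lift_mul, hSa]
    -- extract the (2,1) entry
    ext x
    have hcomm' : lift S₀ ∘L lift M₀ = lift M₀ ∘L lift S₀ := hcomm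
    set z0 : K := (WithLp.equiv 2 (H × H)).symm (x, 0) with hz0
    have e1 : (lift S₀ ∘L lift M₀) z0 = (WithLp.equiv 2 (H × H)).symm (0, T (D x)) := by
      show (WithLp.equiv 2 (H × H)).symm (S₀ (M₀ (x, 0))) = _
      have hM : M₀ (x, 0) = (D x, 0) := by
        show (D x, Dp 0) = (D x, 0)
        rw [map_zero]
      rw [hM]
      rfl
    have e2 : (lift M₀ ∘L lift S₀) z0 = (WithLp.equiv 2 (H × H)).symm (0, Dp (T x)) := by
      show (WithLp.equiv 2 (H × H)).symm (M₀ (S₀ (x, 0))) = _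
      have hS : S₀ (x, 0) = ((0 : H), T x) := rfl
      rw [hS]
      show (WithLp.equiv 2 (H × H)).symm (D 0, Dp (T x)) = _
      rw [map_zero]
    have e3 : ((0 : H), T (D x)) = ((0 : H), Dp (T x)) :=
      (WithLp.equiv 2 (H × H)).symm.injective (e1 ▸ e2 ▸ congrArg (fun u => u z0) hcomm')
    simpa using congrArg Prod.snd e3
  refine ⟨key, ?_⟩
  have h2 := congrArg ContinuousLinearMap.adjoint key
  rw [adjoint_comp, adjoint_comp, hD.isSelfAdjoint.adjoint_eq, hDp.isSelfAdjoint.adjoint_eq] at h2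
  exact h2.symm
end

section
/- Let H be a complex Hilbert space and T : H → H a contraction, with defect operators D = √(1 − T*T), D₊ = √(1 − T T*) and defect spaces 𝒟 = closure(range D), 𝒟₊ = closure(range D₊). Then for every h ∈ H and d ∈ 𝒟₊ the vector D h − T* d lies in 𝒟, and the rotation matrix R : H ⊕ 𝒟₊ → H ⊕ 𝒟 defined by R(h, d) = (T h + D₊ d, D h − T* d) is a well-defined surjective linear isometry (a unitary), where H ⊕ 𝒟₊ and H ⊕ 𝒟 carry the Hilbert direct-sum norm ‖(h,d)‖² = ‖h‖² + ‖d‖². -/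
open ContinuousLinearMap Polynomial

set_option maxHeartbeats 2000000
set_option synthInstance.maxHeartbeats 400000
set_option linter.unusedSectionVars false


set_option maxHeartbeats 1000000
set_option synthInstance.maxHeartbeats 400000

section Aux
variable {H : Type*} [NormedAddCommGroup H] [InnerProductSpace ℂ H] [CompleteSpace H]

lemma aux_pow_intertwine (a b u : H →L[ℂ] H) (h : u * a = b * u) (n : ℕ) :
    u * a ^ n = b ^ n * u := by
  induction n with
  | zero => simp
  | succ n ih =>
    rw [pow_succ, pow_succ, ← mul_assoc, ih, mul_assoc, h, ← mul_assoc]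

lemma aux_poly_intertwine (a b u : H →L[ℂ] H) (h : u * a = b * u) (p : ℝ[X]) :
    u * aeval a p = aeval b p * u := by
  induction p using Polynomial.induction_on with
  | C r => simpa using (Algebra.commutes r u).symm
  | add p q hp hq => simp only [map_add, mul_add, add_mul, hp, hq]
  | monomial n r ih =>
    simp only [map_mul, aeval_C, map_pow, aeval_X]
    calc u * (algebraMap ℝ (H →L[ℂ] H) r * a ^ (n + 1))
        = algebraMap ℝ (H →L[ℂ] H) r * (u * a ^ (n + 1)) := by
          rw [← mul_assoc, ← Algebra.commutes r u, mul_assoc]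
      _ = algebraMap ℝ (H →L[ℂ] H) r * b ^ (n + 1) * u := by
          rw [aux_pow_intertwine a b u h, mul_assoc]

lemma aux_spectrum_subset (a : H →L[ℂ] H) (ha : 0 ≤ a) [Nontrivial H] :
    spectrum ℝ a ⊆ Set.Icc 0 ‖a‖ := by
  intro x hx
  refine ⟨spectrum_nonneg_of_nonneg ha hx, ?_⟩
  have := spectrum.norm_le_norm_of_mem hx
  exact (le_abs_self x).trans (by simpa using this)

lemma aux_sqrt_intertwine (a b u : H →L[ℂ] H) (ha : 0 ≤ a) (hb : 0 ≤ b)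
    (h : u * a = b * u) : u * cfc Real.sqrt a = cfc Real.sqrt b * u := by
  rcases subsingleton_or_nontrivial H with hH | hH
  · have : Subsingleton (H →L[ℂ] H) := by
      constructor; intro f g; ext x; exact Subsingleton.elim _ _
    exact Subsingleton.elim _ _
  have hsa : IsSelfAdjoint a := IsSelfAdjoint.of_nonneg ha
  have hsb : IsSelfAdjoint b := IsSelfAdjoint.of_nonneg hb
  set M : ℝ := max ‖a‖ ‖b‖ with hM
  have hspa : spectrum ℝ a ⊆ Set.Icc 0 M :=
    (aux_spectrum_subset a ha).trans (Set.Icc_subset_Icc le_rfl (le_max_left _ _))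
  have hspb : spectrum ℝ b ⊆ Set.Icc 0 M :=
    (aux_spectrum_subset b hb).trans (Set.Icc_subset_Icc le_rfl (le_max_right _ _))
  have key : ∀ ε : ℝ, 0 < ε → ‖u * cfc Real.sqrt a - cfc Real.sqrt b * u‖ ≤ ε * (‖u‖ + ‖u‖) := by
    intro ε hε
    obtain ⟨p, hp⟩ := exists_polynomial_near_of_continuousOn 0 M Real.sqrt
      Real.continuous_sqrt.continuousOn ε hε
    have hpa : ‖cfc Real.sqrt a - aeval a p‖ ≤ ε := by
      rw [← cfc_polynomial p a, ← cfc_sub Real.sqrt p.eval a]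
      refine norm_cfc_le hε.le fun x hx => ?_
      have := hp x (hspa hx)
      rw [Real.norm_eq_abs, abs_sub_comm]
      exact this.le
    have hpb : ‖aeval b p - cfc Real.sqrt b‖ ≤ ε := by
      rw [← cfc_polynomial p b, ← cfc_sub p.eval Real.sqrt b]
      refine norm_cfc_le hε.le fun x hx => ?_
      have := hp x (hspb hx)
      rw [Real.norm_eq_abs]
      exact this.le
    have hdecomp : u * cfc Real.sqrt a - cfc Real.sqrt b * u
        = u * (cfc Real.sqrt a - aeval a p) + (aeval b p - cfc Real.sqrt b) * u := by
      rw [mul_sub, sub_mul, aux_poly_intertwine a b u h p]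
      abel
    calc ‖u * cfc Real.sqrt a - cfc Real.sqrt b * u‖
        ≤ ‖u * (cfc Real.sqrt a - aeval a p)‖ + ‖(aeval b p - cfc Real.sqrt b) * u‖ := by
          rw [hdecomp]; exact norm_add_le _ _
      _ ≤ ‖u‖ * ε + ε * ‖u‖ := by
          gcongr
          · exact (norm_mul_le _ _).trans (mul_le_mul_of_nonneg_left hpa (norm_nonneg u))
          · exact (norm_mul_le _ _).trans (mul_le_mul_of_nonneg_right hpb (norm_nonneg u))
      _ = ε * (‖u‖ + ‖u‖) := by ring
  rw [← sub_eq_zero, ← norm_le_zero_iff]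
  by_contra hc
  push_neg at hc
  have hpos : 0 < ‖u * cfc Real.sqrt a - cfc Real.sqrt b * u‖ := hc
  have := key (‖u * cfc Real.sqrt a - cfc Real.sqrt b * u‖ / (2 * ‖u‖ + 2)) (by positivity)
  have hu : 0 ≤ ‖u‖ := norm_nonneg u
  set X := ‖u * cfc Real.sqrt a - cfc Real.sqrt b * u‖
  have h2 : X / (2 * ‖u‖ + 2) * (‖u‖ + ‖u‖) < X := by
    rw [div_mul_eq_mul_div, div_lt_iff₀ (by positivity)]
    nlinarith
  linarith

lemma aux_cfc_sqrt (a d : H →L[ℂ] H) (hd : 0 ≤ d) (hda : d * d = a) :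
    cfc Real.sqrt a = d := by
  have hsd : IsSelfAdjoint d := IsSelfAdjoint.of_nonneg hd
  have ha : 0 ≤ a := by
    have h0 := star_mul_self_nonneg d
    rw [hsd.star_eq] at h0
    rw [← hda]; exact h0
  have h1 : CFC.sqrt a = d := CFC.sqrt_unique hda hd
  have h2 : CFC.sqrt a = cfc Real.sqrt a := by
    refine CFC.sqrt_unique ?_ ?_
    · rw [← cfc_mul Real.sqrt Real.sqrt a]
      have : (spectrum ℝ a).EqOn (fun x => Real.sqrt x * Real.sqrt x) id := fun x hx =>
        Real.mul_self_sqrt (spectrum_nonneg_of_nonneg ha hx)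
      rw [cfc_congr this, cfc_id ℝ a]
    · exact cfc_nonneg fun x _ => Real.sqrt_nonneg x
  rw [← h2, h1]

end Aux

/-- The defect space of an operator: the closure of its range. -/
noncomputable def defectSpace {H : Type*} [NormedAddCommGroup H] [InnerProductSpace ℂ H]
    (D : H →L[ℂ] H) : Submodule ℂ H :=
  (LinearMap.range (D : H →ₗ[ℂ] H)).topologicalClosure

/-- For a contraction `T` on a complex Hilbert space with defect operators `D`, `D₊` and
defect spaces `𝒟 = cl(ran D)`, `𝒟₊ = cl(ran D₊)`: for every `h ∈ H` and `d ∈ 𝒟₊` the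
vector `D h - T* d` lies in `𝒟`, and the rotation matrix
`R(h, d) = (T h + D₊ d, D h - T* d)` is a well-defined unitary (surjective linear isometry)
from `H ⊕₂ 𝒟₊` onto `H ⊕₂ 𝒟`. -/
theorem rotation_matrix_unitary
    {H : Type*} [NormedAddCommGroup H] [InnerProductSpace ℂ H] [CompleteSpace H]
    (T D Dp : H →L[ℂ] H) (hT : ‖T‖ ≤ 1)
    (hD : D.IsPositive) (hD2 : D ∘L D = 1 - adjoint T ∘L T)
    (hDp : Dp.IsPositive) (hDp2 : Dp ∘L Dp = 1 - T ∘L adjoint T) :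
    (∀ (h : H) (d : defectSpace Dp), D h - adjoint T d ∈ defectSpace D) ∧
    ∃ R : WithLp 2 (H × ↥(defectSpace Dp)) ≃ₗᵢ[ℂ] WithLp 2 (H × ↥(defectSpace D)),
      ∀ (h : H) (d : defectSpace Dp),
        ((WithLp.equiv 2 (H × ↥(defectSpace D)))
            (R ((WithLp.equiv 2 (H × ↥(defectSpace Dp))).symm (h, d)))).1
          = T h + Dp d ∧
        (((WithLp.equiv 2 (H × ↥(defectSpace D)))
            (R ((WithLp.equiv 2 (H × ↥(defectSpace Dp))).symm (h, d)))).2 : H)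
          = D h - adjoint T d := by
  have hD0 : 0 ≤ D := (nonneg_iff_isPositive D).mpr hD
  have hDp0 : 0 ≤ Dp := (nonneg_iff_isPositive Dp).mpr hDp
  have hDA : D * D = 1 - adjoint T * T := hD2
  have hDpB : Dp * Dp = 1 - T * adjoint T := hDp2
  have hA0 : 0 ≤ (1 - adjoint T * T : H →L[ℂ] H) := by
    have h0 := star_mul_self_nonneg D
    rw [hD.isSelfAdjoint.star_eq] at h0
    rw [← hDA]; exact h0
  have hB0 : 0 ≤ (1 - T * adjoint T : H →L[ℂ] H) := by
    have h0 := star_mul_self_nonneg Dp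
    rw [hDp.isSelfAdjoint.star_eq] at h0
    rw [← hDpB]; exact h0
  have hTA : T * (1 - adjoint T * T) = (1 - T * adjoint T) * T := by
    simp [mul_sub, sub_mul, mul_assoc]
  have hTD : T * D = Dp * T := by
    have h1 := aux_sqrt_intertwine _ _ T hA0 hB0 hTA
    rwa [aux_cfc_sqrt _ D hD0 hDA, aux_cfc_sqrt _ Dp hDp0 hDpB] at h1
  have hDT : D * adjoint T = adjoint T * Dp := by
    have h1 := congrArg star hTD
    simp only [star_mul] at h1
    rwa [hD.isSelfAdjoint.star_eq, hDp.isSelfAdjoint.star_eq, star_eq_adjoint] at h1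
  -- pointwise identities
  have e1 : ∀ x : H, adjoint T (T x) + D (D x) = x := by
    intro x
    have h1 := ContinuousLinearMap.ext_iff.mp hD2 x
    simp only [comp_apply, sub_apply, one_apply] at h1
    rw [h1]; abel
  have e3 : ∀ x : H, Dp (Dp x) + T (adjoint T x) = x := by
    intro x
    have h1 := ContinuousLinearMap.ext_iff.mp hDp2 x
    simp only [comp_apply, sub_apply, one_apply] at h1
    rw [h1]; abel
  have e4 : ∀ x : H, T (D x) = Dp (T x) := by
    intro x
    have h1 := ContinuousLinearMap.ext_iff.mp hTD x
    exact h1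
  have e2 : ∀ x : H, D (adjoint T x) = adjoint T (Dp x) := by
    intro x
    have h1 := ContinuousLinearMap.ext_iff.mp hDT x
    exact h1
  -- membership
  have hmemD : ∀ x : H, D x ∈ defectSpace D := fun x =>
    Submodule.le_topologicalClosure _ (LinearMap.mem_range_self _ x)
  have hmemDp : ∀ x : H, Dp x ∈ defectSpace Dp := fun x =>
    Submodule.le_topologicalClosure _ (LinearMap.mem_range_self _ x)
  have hclos : ∀ d : H, d ∈ defectSpace Dp →
      d ∈ closure ((LinearMap.range (Dp : H →ₗ[ℂ] H) : Submodule ℂ H) : Set H) := fun d hd => hd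
  have hclosD : ∀ d : H, d ∈ defectSpace D →
      d ∈ closure ((LinearMap.range (D : H →ₗ[ℂ] H) : Submodule ℂ H) : Set H) := fun d hd => hd
  have hTstar : ∀ d : H, d ∈ defectSpace Dp → adjoint T d ∈ defectSpace D := by
    intro d hd
    have hmaps : Set.MapsTo (adjoint T)
        ((LinearMap.range (Dp : H →ₗ[ℂ] H) : Submodule ℂ H) : Set H)
        ((defectSpace D : Submodule ℂ H) : Set H) := by
      rintro x ⟨y, rfl⟩
      show adjoint T (Dp y) ∈ defectSpace D
      rw [← e2 y]
      exact hmemD _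
    have h1 := map_mem_closure (adjoint T).continuous (hclos d hd) hmaps
    have hcl : IsClosed ((defectSpace D : Submodule ℂ H) : Set H) :=
      Submodule.isClosed_topologicalClosure _
    rwa [hcl.closure_eq] at h1
  have hTmem : ∀ e : H, e ∈ defectSpace D → T e ∈ defectSpace Dp := by
    intro e he
    have hmaps : Set.MapsTo T
        ((LinearMap.range (D : H →ₗ[ℂ] H) : Submodule ℂ H) : Set H)
        ((defectSpace Dp : Submodule ℂ H) : Set H) := by
      rintro x ⟨y, rfl⟩
      show T (D y) ∈ defectSpace Dp
      rw [e4 y]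
      exact hmemDp _
    have h1 := map_mem_closure T.continuous (hclosD e he) hmaps
    have hcl : IsClosed ((defectSpace Dp : Submodule ℂ H) : Set H) :=
      Submodule.isClosed_topologicalClosure _
    rwa [hcl.closure_eq] at h1
  have mem1 : ∀ (h : H) (d : ↥(defectSpace Dp)), D h - adjoint T ↑d ∈ defectSpace D :=
    fun h d => Submodule.sub_mem _ (hmemD h) (hTstar d d.2)
  have mem2 : ∀ (k : H) (e : ↥(defectSpace D)), Dp k - T ↑e ∈ defectSpace Dp :=
    fun k e => Submodule.sub_mem _ (hmemDp k) (hTmem e e.2)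
  refine ⟨mem1, ?_⟩
  -- the linear maps
  set f : (H × ↥(defectSpace Dp)) →ₗ[ℂ] (H × ↥(defectSpace D)) :=
    LinearMap.prod
      ((T : H →ₗ[ℂ] H).comp (LinearMap.fst ℂ H _) +
        (Dp : H →ₗ[ℂ] H).comp ((defectSpace Dp).subtype.comp (LinearMap.snd ℂ H _)))
      (LinearMap.codRestrict (defectSpace D)
        ((D : H →ₗ[ℂ] H).comp (LinearMap.fst ℂ H _) -
          (adjoint T : H →ₗ[ℂ] H).comp ((defectSpace Dp).subtype.comp (LinearMap.snd ℂ H _)))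
        (fun x => mem1 x.1 x.2)) with hf
  set g : (H × ↥(defectSpace D)) →ₗ[ℂ] (H × ↥(defectSpace Dp)) :=
    LinearMap.prod
      ((adjoint T : H →ₗ[ℂ] H).comp (LinearMap.fst ℂ H _) +
        (D : H →ₗ[ℂ] H).comp ((defectSpace D).subtype.comp (LinearMap.snd ℂ H _)))
      (LinearMap.codRestrict (defectSpace Dp)
        ((Dp : H →ₗ[ℂ] H).comp (LinearMap.fst ℂ H _) -
          (T : H →ₗ[ℂ] H).comp ((defectSpace D).subtype.comp (LinearMap.snd ℂ H _)))
        (fun x => mem2 x.1 x.2)) with hg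
  have hfapp : ∀ (h : H) (d : ↥(defectSpace Dp)),
      f (h, d) = (T h + Dp ↑d, ⟨D h - adjoint T ↑d, mem1 h d⟩) := fun h d => rfl
  have hgapp : ∀ (k : H) (e : ↥(defectSpace D)),
      g (k, e) = (adjoint T k + D ↑e, ⟨Dp k - T ↑e, mem2 k e⟩) := fun k e => rfl
  have hgf : g.comp f = LinearMap.id := by
    apply LinearMap.ext
    rintro ⟨h, d⟩
    rw [LinearMap.comp_apply, hfapp, hgapp, LinearMap.id_apply]
    refine Prod.ext ?_ (Subtype.ext ?_)
    · show adjoint T (T h + Dp ↑d) + D (D h - adjoint T ↑d) = h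
      rw [map_add, map_sub, ← e2]
      conv_rhs => rw [← e1 h]
      abel
    · show Dp (T h + Dp ↑d) - T (D h - adjoint T ↑d) = ↑d
      rw [map_add, map_sub, ← e4]
      conv_rhs => rw [← e3 (↑d : H)]
      abel
  have hfg : f.comp g = LinearMap.id := by
    apply LinearMap.ext
    rintro ⟨k, e⟩
    rw [LinearMap.comp_apply, hgapp, hfapp, LinearMap.id_apply]
    refine Prod.ext ?_ (Subtype.ext ?_)
    · show T (adjoint T k + D ↑e) + Dp (Dp k - T ↑e) = k
      rw [map_add, map_sub, e4]
      conv_rhs => rw [← e3 k]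
      abel
    · show D (adjoint T k + D ↑e) - adjoint T (Dp k - T ↑e) = ↑e
      rw [map_add, map_sub, e2]
      conv_rhs => rw [← e1 (↑e : H)]
      abel
  set E0 : (H × ↥(defectSpace Dp)) ≃ₗ[ℂ] (H × ↥(defectSpace D)) :=
    LinearEquiv.ofLinear f g hfg hgf with hE0
  set E : WithLp 2 (H × ↥(defectSpace Dp)) ≃ₗ[ℂ] WithLp 2 (H × ↥(defectSpace D)) :=
    (WithLp.linearEquiv 2 ℂ (H × ↥(defectSpace Dp))).trans
      (E0.trans (WithLp.linearEquiv 2 ℂ (H × ↥(defectSpace D))).symm) with hE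
  -- norm identity in H
  have hDadj : adjoint D = D := hD.isSelfAdjoint.adjoint_eq
  have hDpadj : adjoint Dp = Dp := hDp.isSelfAdjoint.adjoint_eq
  have keyinner : ∀ h d : H,
      (inner ℂ (T h + Dp d) (T h + Dp d) : ℂ) + inner ℂ (D h - adjoint T d) (D h - adjoint T d)
        = inner ℂ h h + inner ℂ d d := by
    intro h d
    have r1 : (inner ℂ (T h) (T h) : ℂ) + inner ℂ (D h) (D h) = inner ℂ h h := by
      have q1 : (inner ℂ (adjoint T (T h) + D (D h)) h : ℂ) = inner ℂ h h := by rw [e1 h]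
      rw [inner_add_left, adjoint_inner_left] at q1
      nth_rw 1 [← hDadj] at q1
      rw [adjoint_inner_left] at q1
      exact q1
    have r2 : (inner ℂ (Dp d) (Dp d) : ℂ) + inner ℂ (adjoint T d) (adjoint T d) = inner ℂ d d := by
      have q1 : (inner ℂ (Dp (Dp d) + T (adjoint T d)) d : ℂ) = inner ℂ d d := by rw [e3 d]
      rw [inner_add_left] at q1
      nth_rw 1 [← hDpadj] at q1
      rw [adjoint_inner_left] at q1
      rw [← adjoint_inner_right T (adjoint T d) d] at q1
      exact q1
    have r3 : (inner ℂ (T h) (Dp d) : ℂ) = inner ℂ (D h) (adjoint T d) := by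
      rw [adjoint_inner_right T (D h) d, e4 h]
      nth_rw 2 [← hDpadj]
      rw [adjoint_inner_left]
    have r4 : (inner ℂ (Dp d) (T h) : ℂ) = inner ℂ (adjoint T d) (D h) := by
      calc (inner ℂ (Dp d) (T h) : ℂ)
          = starRingEnd ℂ (inner ℂ (T h) (Dp d) : ℂ) := (inner_conj_symm _ _).symm
        _ = starRingEnd ℂ (inner ℂ (D h) (adjoint T d) : ℂ) := by rw [r3]
        _ = inner ℂ (adjoint T d) (D h) := inner_conj_symm _ _
    simp only [inner_add_left, inner_add_right, inner_sub_left, inner_sub_right]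
    linear_combination r1 + r2 + r3 + r4
  have keynorm : ∀ h d : H,
      ‖T h + Dp d‖ ^ 2 + ‖D h - adjoint T d‖ ^ 2 = ‖h‖ ^ 2 + ‖d‖ ^ 2 := by
    intro h d
    have h2 := congrArg Complex.re (keyinner h d)
    simpa only [← RCLike.re_to_complex, map_add, ← @norm_sq_eq_re_inner ℂ] using h2
  refine ⟨⟨E, ?_⟩, fun h d => ⟨rfl, rfl⟩⟩
  intro x
  have hx1 : ‖E x‖ ^ 2 = ‖x‖ ^ 2 := by
    rw [WithLp.prod_norm_sq_eq_of_L2, WithLp.prod_norm_sq_eq_of_L2]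
    have h1 : (E x).fst = T x.fst + Dp ↑(x.snd) := rfl
    have h2 : ((E x).snd : H) = D x.fst - adjoint T ↑(x.snd) := rfl
    have h3 : ‖(E x).snd‖ = ‖((E x).snd : H)‖ := rfl
    have h4 : ‖x.snd‖ = ‖(x.snd : H)‖ := rfl
    rw [h1, h3, h2, h4]
    exact keynorm x.fst (x.snd : H)
  have := congrArg Real.sqrt hx1
  rwa [Real.sqrt_sq (norm_nonneg _), Real.sqrt_sq (norm_nonneg _)] at this
end

section
/- Let H be a complex Hilbert space and T : H → H a contraction, with defect operator D = √(1 − T*T) and defect space 𝒟 = closure(range D). Define U on the Hilbert space H ⊕ ℓ²(ℕ, 𝒟) (direct sum norm, ℓ² of 𝒟-valued square-summable sequences) by U(h, f) = (T h, g) where g₀ = D h and g_{n+1} = f_n for n ∈ ℕ. Then U is a linear isometry: ‖U(h,f)‖ = ‖(h,f)‖ for all h ∈ H and f ∈ ℓ²(ℕ, 𝒟). -/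
open ContinuousLinearMap
open scoped ENNReal

section auxCons

variable {E : Type*} [NormedAddCommGroup E]

/-- Prepend an element to a sequence. -/
def consFun (x : E) (f : ℕ → E) : ℕ → E := fun n => Nat.casesOn n x f

lemma summable_consFun_sq (x : E) (f : lp (fun _ : ℕ => E) 2) :
    Summable (fun n => ‖consFun x (⇑f) n‖ ^ (2 : ℝ≥0∞).toReal) := by
  have hp : (0:ℝ) < (2 : ℝ≥0∞).toReal := by norm_num
  have hf : Summable (fun n => ‖f n‖ ^ (2 : ℝ≥0∞).toReal) :=
    (lp.memℓp f).summable hp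
  have : Summable (fun n => ‖consFun x (⇑f) (n + 1)‖ ^ (2 : ℝ≥0∞).toReal) := hf
  exact (summable_nat_add_iff 1).mp this

lemma memℓp_consFun (x : E) (f : lp (fun _ : ℕ => E) 2) :
    Memℓp (consFun x (⇑f)) 2 :=
  memℓp_gen (summable_consFun_sq x f)

/-- Prepend an element to an `ℓ²` sequence. -/
noncomputable def lpCons (x : E) (f : lp (fun _ : ℕ => E) 2) : lp (fun _ : ℕ => E) 2 :=
  ⟨consFun x (⇑f), memℓp_consFun x f⟩

@[simp] lemma lpCons_apply_zero (x : E) (f : lp (fun _ : ℕ => E) 2) :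
    lpCons x f 0 = x := rfl

@[simp] lemma lpCons_apply_succ (x : E) (f : lp (fun _ : ℕ => E) 2) (n : ℕ) :
    lpCons x f (n + 1) = f n := rfl

lemma norm_lpCons_sq (x : E) (f : lp (fun _ : ℕ => E) 2) :
    ‖lpCons x f‖ ^ 2 = ‖x‖ ^ 2 + ‖f‖ ^ 2 := by
  have hp : (0:ℝ) < (2 : ℝ≥0∞).toReal := by norm_num
  have h1 : ‖lpCons x f‖ ^ (2 : ℝ≥0∞).toReal
      = ∑' n, ‖lpCons x f n‖ ^ (2 : ℝ≥0∞).toReal := lp.norm_rpow_eq_tsum hp _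
  have h2 : ‖f‖ ^ (2 : ℝ≥0∞).toReal
      = ∑' n, ‖f n‖ ^ (2 : ℝ≥0∞).toReal := lp.norm_rpow_eq_tsum hp _
  have h3 : ∑' n, ‖lpCons x f n‖ ^ (2 : ℝ≥0∞).toReal
      = ‖x‖ ^ (2 : ℝ≥0∞).toReal + ∑' n, ‖f n‖ ^ (2 : ℝ≥0∞).toReal := by
    have hc : ⇑(lpCons x f) = consFun x (⇑f) := rfl
    rw [hc, Summable.tsum_eq_zero_add (summable_consFun_sq x f)]
    rfl
  have key : ‖lpCons x f‖ ^ (2 : ℝ≥0∞).toReal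
      = ‖x‖ ^ (2 : ℝ≥0∞).toReal + ‖f‖ ^ (2 : ℝ≥0∞).toReal := by
    rw [h1, h3, h2]
  have htr : (2 : ℝ≥0∞).toReal = ((2 : ℕ) : ℝ) := by norm_num
  rw [htr] at key
  rw [Real.rpow_natCast, Real.rpow_natCast, Real.rpow_natCast] at key
  exact_mod_cast key

lemma lpCons_add (x y : E) (f g : lp (fun _ : ℕ => E) 2) :
    lpCons (x + y) (f + g) = lpCons x f + lpCons y g := by
  apply lp.ext
  funext n
  cases n with
  | zero => simp [lp.coeFn_add]
  | succ n => simp [lp.coeFn_add]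

end auxCons

section auxConsSmul

variable {𝕜 E : Type*} [NormedField 𝕜] [NormedAddCommGroup E] [NormedSpace 𝕜 E]

lemma lpCons_smul (c : 𝕜) (x : E) (f : lp (fun _ : ℕ => E) 2) :
    lpCons (c • x) (c • f) = c • lpCons x f := by
  apply lp.ext
  funext n
  cases n with
  | zero => simp [lp.coeFn_smul]
  | succ n => simp [lp.coeFn_smul]

end auxConsSmul

lemma defect_norm_sq {H : Type*} [NormedAddCommGroup H] [InnerProductSpace ℂ H]
    [CompleteSpace H] (T D : H →L[ℂ] H)
    (hD : D.IsPositive) (hD2 : D ∘L D = 1 - adjoint T ∘L T) (h : H) :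
    ‖T h‖ ^ 2 + ‖D h‖ ^ 2 = ‖h‖ ^ 2 := by
  have hsa : adjoint D = D := hD.1.clm_adjoint_eq
  have e1 : (inner ℂ (T h) (T h) : ℂ) = inner ℂ h ((adjoint T ∘L T) h) := by
    rw [comp_apply, ← adjoint_inner_right]
  have e2 : (inner ℂ (D h) (D h) : ℂ) = inner ℂ h ((D ∘L D) h) := by
    rw [comp_apply, ← adjoint_inner_right, hsa]
  have esum : (inner ℂ (T h) (T h) : ℂ) + inner ℂ (D h) (D h) = inner ℂ h h := by
    rw [e1, e2, ← inner_add_right]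
    congr 1
    have h4 : (adjoint T ∘L T) h + (D ∘L D) h = ((adjoint T ∘L T) + (D ∘L D)) h := rfl
    rw [h4, hD2]
    simp
  have n1 : ‖T h‖ ^ 2 = Complex.re (inner ℂ (T h) (T h) : ℂ) :=
    (norm_sq_eq_re_inner (𝕜 := ℂ) (T h))
  have n2 : ‖D h‖ ^ 2 = Complex.re (inner ℂ (D h) (D h) : ℂ) :=
    (norm_sq_eq_re_inner (𝕜 := ℂ) (D h))
  have n3 : ‖h‖ ^ 2 = Complex.re (inner ℂ h h : ℂ) :=
    (norm_sq_eq_re_inner (𝕜 := ℂ) h)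
  rw [n1, n2, n3, ← Complex.add_re, esum]

/-- For a contraction `T` on a complex Hilbert space with defect operator `D = √(1 - T*T)`
and defect space `𝒟 = cl(ran D)`, the map `U(h, f) = (T h, g)` with `g₀ = D h`,
`g_{n+1} = f n` is a well-defined linear isometry on `H ⊕₂ ℓ²(ℕ, 𝒟)`. -/
theorem isometric_dilation_isometry
    {H : Type*} [NormedAddCommGroup H] [InnerProductSpace ℂ H] [CompleteSpace H]
    (T D : H →L[ℂ] H) (hT : ‖T‖ ≤ 1)
    (hD : D.IsPositive) (hD2 : D ∘L D = 1 - adjoint T ∘L T) :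
    ∃ U : WithLp 2 (H × lp (fun _ : ℕ => ↥(defectSpace D)) 2) →ₗᵢ[ℂ]
          WithLp 2 (H × lp (fun _ : ℕ => ↥(defectSpace D)) 2),
      ∀ (h : H) (f : lp (fun _ : ℕ => ↥(defectSpace D)) 2),
        ((WithLp.equiv 2 _) (U ((WithLp.equiv 2 _).symm (h, f)))).1 = T h ∧
        ((((WithLp.equiv 2 _) (U ((WithLp.equiv 2 _).symm (h, f)))).2 0 : H) = D h) ∧
        ∀ n : ℕ, ((WithLp.equiv 2 _) (U ((WithLp.equiv 2 _).symm (h, f)))).2 (n + 1) = f n := by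
  classical
  set E := ↥(defectSpace D) with hE
  have hmem : ∀ h : H, D h ∈ defectSpace D := fun h =>
    Submodule.le_topologicalClosure _ ⟨h, rfl⟩
  -- the defect vector as an element of the defect space
  let dL : H →ₗ[ℂ] E := (D : H →ₗ[ℂ] H).codRestrict (defectSpace D) hmem
  -- the cons map as a linear map
  let consL : E × lp (fun _ : ℕ => E) 2 →ₗ[ℂ] lp (fun _ : ℕ => E) 2 :=
    { toFun := fun p => lpCons p.1 p.2
      map_add' := fun p q => by
        show lpCons (p.1 + q.1) (p.2 + q.2) = _
        rw [lpCons_add]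
      map_smul' := fun c p => by
        show lpCons (c • p.1) (c • p.2) = _
        rw [lpCons_smul]
        rfl }
  let V : H × lp (fun _ : ℕ => E) 2 →ₗ[ℂ] H × lp (fun _ : ℕ => E) 2 :=
    ((T : H →ₗ[ℂ] H) ∘ₗ LinearMap.fst ℂ H _).prod
      (consL ∘ₗ (dL.prodMap (LinearMap.id)))
  let U₀ : WithLp 2 (H × lp (fun _ : ℕ => E) 2) →ₗ[ℂ]
      WithLp 2 (H × lp (fun _ : ℕ => E) 2) :=
    (WithLp.linearEquiv 2 ℂ _).symm.toLinearMap ∘ₗ V ∘ₗ (WithLp.linearEquiv 2 ℂ _).toLinearMap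
  have hnorm : ∀ x, ‖U₀ x‖ = ‖x‖ := by
    intro x
    have hsq : ‖U₀ x‖ ^ 2 = ‖x‖ ^ 2 := by
      rw [WithLp.prod_norm_sq_eq_of_L2, WithLp.prod_norm_sq_eq_of_L2 x]
      have h1 : (U₀ x).fst = T ((WithLp.equiv 2 _) x).1 := rfl
      have h2 : (U₀ x).snd = lpCons (dL ((WithLp.equiv 2 _) x).1) ((WithLp.equiv 2 _) x).2 := rfl
      rw [h1, h2, norm_lpCons_sq]
      have hd : ‖dL ((WithLp.equiv 2 _) x).1‖ = ‖D ((WithLp.equiv 2 _) x).1‖ := rfl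
      rw [hd, ← add_assoc, defect_norm_sq T D hD hD2]
      rfl
    have h0 : (0:ℝ) ≤ ‖U₀ x‖ := norm_nonneg _
    have h0' : (0:ℝ) ≤ ‖x‖ := norm_nonneg _
    nlinarith [sq_nonneg (‖U₀ x‖ - ‖x‖), sq_nonneg (‖U₀ x‖ + ‖x‖)]
  refine ⟨⟨U₀, hnorm⟩, ?_⟩
  intro h f
  exact ⟨rfl, rfl, fun n => rfl⟩
end

section
/- Let H be a complex Hilbert space, T : H → H a contraction, D = √(1 − T*T), 𝒟 = closure(range D), and let U on H ⊕ ℓ²(ℕ, 𝒟) be defined by U(h, f) = (T h, g) with g₀ = D h, g_{n+1} = f_n. Then for every n ∈ ℕ, h ∈ H and f ∈ ℓ²(ℕ, 𝒟) one has Uⁿ(h, f) = (Tⁿ h, g⁽ⁿ⁾), where g⁽ⁿ⁾_k = D T^{n−1−k} h for 0 ≤ k < n and g⁽ⁿ⁾_k = f_{k−n} for k ≥ n. In particular the first component of Uⁿ(h, 0) is Tⁿ h, so U is a power dilation of T. -/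
open ContinuousLinearMap

/-- For a contraction `T` with defect operator `D` and the dilation
`U(h, f) = (T h, (D h, f₀, f₁, …))` on `H ⊕₂ ℓ²(ℕ, 𝒟)`, one has, for every `n`,
`Uⁿ(h, f) = (Tⁿ h, g⁽ⁿ⁾)` with `g⁽ⁿ⁾ₖ = D T^{n-1-k} h` for `k < n` and
`g⁽ⁿ⁾_{n+k} = f_k`. In particular `U` is a power dilation of `T`. -/
theorem isometric_dilation_power_formula
    {H : Type*} [NormedAddCommGroup H] [InnerProductSpace ℂ H] [CompleteSpace H]
    (T D : H →L[ℂ] H) (hT : ‖T‖ ≤ 1)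
    (hD : D.IsPositive) (hD2 : D ∘L D = 1 - adjoint T ∘L T)
    (U : WithLp 2 (H × lp (fun _ : ℕ => ↥(defectSpace D)) 2) →L[ℂ]
         WithLp 2 (H × lp (fun _ : ℕ => ↥(defectSpace D)) 2))
    (hU : ∀ (h : H) (f : lp (fun _ : ℕ => ↥(defectSpace D)) 2),
        ((WithLp.equiv 2 _) (U ((WithLp.equiv 2 _).symm (h, f)))).1 = T h ∧
        ((((WithLp.equiv 2 _) (U ((WithLp.equiv 2 _).symm (h, f)))).2 0 : H) = D h) ∧
        ∀ n : ℕ, ((WithLp.equiv 2 _) (U ((WithLp.equiv 2 _).symm (h, f)))).2 (n + 1) = f n) :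
    ∀ (n : ℕ) (h : H) (f : lp (fun _ : ℕ => ↥(defectSpace D)) 2),
      ((WithLp.equiv 2 _) ((U ^ n) ((WithLp.equiv 2 _).symm (h, f)))).1 = (T ^ n) h ∧
      (∀ k : ℕ, k < n →
        ((((WithLp.equiv 2 _) ((U ^ n) ((WithLp.equiv 2 _).symm (h, f)))).2 k : H)
          = D ((T ^ (n - 1 - k)) h))) ∧
      ∀ k : ℕ,
        ((WithLp.equiv 2 _) ((U ^ n) ((WithLp.equiv 2 _).symm (h, f)))).2 (n + k) = f k := by
  intro n
  induction n with
  | zero =>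
    intro h f
    refine ⟨by simp, fun k hk => by omega, fun k => by simp⟩
  | succ n ih =>
    intro h f
    obtain ⟨hU1, hU2, hU3⟩ := hU h f
    set y := U ((WithLp.equiv 2 _).symm (h, f)) with hy
    have key : (U ^ (n+1)) ((WithLp.equiv 2 _).symm (h, f)) = (U ^ n) y := by
      rw [pow_succ]; rfl
    obtain ⟨ih1, ih2, ih3⟩ := ih (((WithLp.equiv 2 _) y).1) (((WithLp.equiv 2 _) y).2)
    have hrep : (WithLp.equiv 2 _).symm (((WithLp.equiv 2 _) y).1, ((WithLp.equiv 2 _) y).2)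
        = y := rfl
    rw [hrep] at ih1 ih2 ih3
    refine ⟨?_, ?_, ?_⟩
    · rw [key, ih1, hU1, pow_succ]; rfl
    · intro k hk
      rw [key]
      rcases Nat.lt_or_ge k n with hkn | hkn
      · rw [ih2 k hkn, hU1]
        have hTpow : (T ^ (n + 1 - 1 - k)) h = (T ^ (n - 1 - k)) (T h) := by
          have : T ^ (n + 1 - 1 - k) = T ^ (n - 1 - k) * T := by
            rw [← pow_succ]; congr 1; omega
          rw [this]; rfl
        rw [hTpow]
      · have hk0 : k = n := by omega
        have h0 := ih3 0
        rw [Nat.add_zero] at h0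
        rw [hk0, h0, hU2]
        have he : n + 1 - 1 - n = 0 := by omega
        rw [he, pow_zero]; rfl
    · intro k
      rw [key]
      have hidx : n + 1 + k = n + (k + 1) := by omega
      rw [hidx, ih3 (k + 1), hU3 k]
end

section
/- Let H be a complex Hilbert space, T : H → H a contraction, D = √(1 − T*T), 𝒟 = closure(range D), and let U on H ⊕ ℓ²(ℕ, 𝒟) be defined by U(h, f) = (T h, g) with g₀ = D h, g_{n+1} = f_n. Then the dilation U is minimal: the smallest closed subspace of H ⊕ ℓ²(ℕ, 𝒟) that contains H ⊕ {0} and is invariant under U is the whole space H ⊕ ℓ²(ℕ, 𝒟); equivalently, the closed linear span of { Uⁿ(h, 0) : n ∈ ℕ, h ∈ H } equals H ⊕ ℓ²(ℕ, 𝒟). -/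
open ContinuousLinearMap

/-- For a contraction `T` with defect operator `D` and the dilation
`U(h, f) = (T h, (D h, f₀, f₁, …))` on `H ⊕₂ ℓ²(ℕ, 𝒟)`, the dilation `U` is minimal:
the closed linear span of `{ Uⁿ(h, 0) : n ∈ ℕ, h ∈ H }` is the whole space. -/
theorem isometric_dilation_minimal
    {H : Type*} [NormedAddCommGroup H] [InnerProductSpace ℂ H] [CompleteSpace H]
    (T D : H →L[ℂ] H) (hT : ‖T‖ ≤ 1)
    (hD : D.IsPositive) (hD2 : D ∘L D = 1 - adjoint T ∘L T)
    (U : WithLp 2 (H × lp (fun _ : ℕ => ↥(defectSpace D)) 2) →L[ℂ]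
         WithLp 2 (H × lp (fun _ : ℕ => ↥(defectSpace D)) 2))
    (hU : ∀ (h : H) (f : lp (fun _ : ℕ => ↥(defectSpace D)) 2),
        ((WithLp.equiv 2 _) (U ((WithLp.equiv 2 _).symm (h, f)))).1 = T h ∧
        ((((WithLp.equiv 2 _) (U ((WithLp.equiv 2 _).symm (h, f)))).2 0 : H) = D h) ∧
        ∀ n : ℕ, ((WithLp.equiv 2 _) (U ((WithLp.equiv 2 _).symm (h, f)))).2 (n + 1) = f n) :
    (Submodule.span ℂ
        {x : WithLp 2 (H × lp (fun _ : ℕ => ↥(defectSpace D)) 2) |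
          ∃ (n : ℕ) (h : H), x = (U ^ n) ((WithLp.equiv 2 _).symm (h, 0))}).topologicalClosure
      = ⊤ := by
  classical
  set e := WithLp.equiv 2 (H × lp (fun _ : ℕ => ↥(defectSpace D)) 2) with he
  haveI : CompleteSpace ↥(defectSpace D) :=
    (Submodule.isClosed_topologicalClosure _).completeSpace_coe
  have hmem : ∀ g : H, D g ∈ defectSpace D := fun g =>
    Submodule.le_topologicalClosure _ ⟨g, rfl⟩
  set S : Set (WithLp 2 (H × lp (fun _ : ℕ => ↥(defectSpace D)) 2)) := {x | ∃ (n : ℕ) (h : H), x = (U ^ n) (e.symm (h, 0))} with hS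
  -- basic elements in S
  have hS1 : ∀ g : H, e.symm (g, 0) ∈ S := by
    intro g
    exact ⟨0, g, by simp⟩
  -- the action of U on basic elements
  have step1 : ∀ g : H,
      U (e.symm (g, 0)) = e.symm (T g, lp.single 2 0 (⟨D g, hmem g⟩ : ↥(defectSpace D))) := by
    intro g
    obtain ⟨h1, h2, h3⟩ := hU g 0
    apply e.injective
    rw [Equiv.apply_symm_apply]
    refine Prod.ext h1 ?_
    refine lp.ext (funext fun j => ?_)
    cases j with
    | zero =>
      refine Subtype.ext ?_
      rw [h2, lp.single_apply_self]
    | succ j =>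
      rw [h3 j, lp.single_apply_ne 2 0 _ (Nat.succ_ne_zero j)]
      rfl
  have step2 : ∀ (n : ℕ) (d : ↥(defectSpace D)),
      U (e.symm (0, lp.single 2 n d)) = e.symm (0, lp.single 2 (n + 1) d) := by
    intro n d
    obtain ⟨h1, h2, h3⟩ := hU 0 (lp.single 2 n d)
    apply e.injective
    rw [Equiv.apply_symm_apply]
    refine Prod.ext (by rw [h1, map_zero]) ?_
    refine lp.ext (funext fun j => ?_)
    cases j with
    | zero =>
      rw [lp.single_apply_ne 2 (n + 1) _ (Nat.succ_ne_zero n).symm]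
      exact Subtype.ext (by rw [h2, map_zero]; rfl)
    | succ j =>
      rw [h3 j]
      rcases eq_or_ne j n with rfl | hj
      · rw [lp.single_apply_self, lp.single_apply_self]
      · rw [lp.single_apply_ne 2 n _ hj,
          lp.single_apply_ne 2 (n + 1) _ (fun hc => hj (Nat.succ_injective hc))]
  -- key identity
  have key : ∀ (n : ℕ) (g : H),
      (U ^ (n + 1)) (e.symm (g, 0)) =
        (U ^ n) (e.symm (T g, 0)) + e.symm (0, lp.single 2 n (⟨D g, hmem g⟩ : ↥(defectSpace D))) := by
    intro n
    induction n with
    | zero =>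
      intro g
      rw [pow_one, pow_zero, ContinuousLinearMap.one_apply, step1 g, he, WithLp.equiv_symm_apply,
        ← WithLp.toLp_add]
      congr 1
      rw [Prod.mk_add_mk, add_zero, zero_add]
    | succ n ih =>
      intro g
      rw [pow_succ' U (n + 1), ContinuousLinearMap.mul_apply, ih g, map_add,
        ← ContinuousLinearMap.mul_apply U (U ^ n),
        ← pow_succ' U n, step2]
  -- the "single" elements are in the span
  have hsingle : ∀ (n : ℕ) (g : H),
      e.symm (0, lp.single 2 n (⟨D g, hmem g⟩ : ↥(defectSpace D))) ∈ Submodule.span ℂ S := by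
    intro n g
    have : e.symm (0, lp.single 2 n (⟨D g, hmem g⟩ : ↥(defectSpace D))) =
        (U ^ (n + 1)) (e.symm (g, 0)) - (U ^ n) (e.symm (T g, 0)) := by
      rw [key n g]; abel
    rw [this]
    exact sub_mem (Submodule.subset_span ⟨n + 1, g, rfl⟩)
      (Submodule.subset_span ⟨n, T g, rfl⟩)
  -- now the orthogonality argument
  rw [Submodule.topologicalClosure_eq_top_iff, Submodule.eq_bot_iff]
  intro x hx
  rw [Submodule.mem_orthogonal] at hx
  have hfst : x.fst = 0 := by
    have h0 := hx _ (Submodule.subset_span (hS1 x.fst))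
    simp only [WithLp.prod_inner_apply, he, WithLp.equiv_symm_apply, WithLp.ofLp_toLp,
      WithLp.ofLp_fst, WithLp.ofLp_snd, inner_zero_left, add_zero] at h0
    exact inner_self_eq_zero.mp h0
  have hsnd : x.snd = 0 := by
    refine lp.ext (funext fun n => ?_)
    have horth : ∀ g : H, (inner ℂ (D g) ((x.snd n : H)) : ℂ) = 0 := by
      intro g
      have h0 := hx _ (hsingle n g)
      simp only [WithLp.prod_inner_apply, he, WithLp.equiv_symm_apply, WithLp.ofLp_toLp,
        WithLp.ofLp_fst, WithLp.ofLp_snd, inner_zero_left, zero_add] at h0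
      rw [lp.inner_single_left] at h0
      exact h0
    have hmem2 : ((x.snd n : H)) ∈ (LinearMap.range (D : H →ₗ[ℂ] H))ᗮ := by
      rw [Submodule.mem_orthogonal]
      rintro u ⟨g, rfl⟩
      exact horth g
    have hmem3 : ((x.snd n : H)) ∈ (LinearMap.range (D : H →ₗ[ℂ] H))ᗮᗮ := by
      rw [Submodule.orthogonal_orthogonal_eq_closure]
      exact (x.snd n).2
    have : (inner ℂ ((x.snd n : H)) ((x.snd n : H)) : ℂ) = 0 :=
      hmem3 _ hmem2
    exact Subtype.ext (inner_self_eq_zero.mp this)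
  have : x = e.symm (x.fst, x.snd) := rfl
  rw [this, hfst, hsnd]; rfl
end

section
/- Let H be a complex Hilbert space and T : H → H a *-stable contraction (i.e. ‖T‖ ≤ 1 and (T*)ⁿ h → 0 for all h ∈ H). Let D₊ = √(1 − T T*), 𝒟₊ = closure(range D₊), C : H → ℓ²(ℕ, 𝒟₊) the isometry (C h)ₙ = D₊ (T*)ⁿ h, and S the right shift on ℓ²(ℕ, 𝒟₊). Then T = C* ∘ S ∘ C; that is, T is unitarily equivalent, via C, to the compression of the unilateral shift S to the coinvariant subspace C(H) (the functional model of T). -/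
open ContinuousLinearMap Filter
open scoped InnerProductSpace

instance {H : Type*} [NormedAddCommGroup H] [InnerProductSpace ℂ H] [CompleteSpace H]
    (D : H →L[ℂ] H) : CompleteSpace (defectSpace D) :=
  (Submodule.isClosed_topologicalClosure _).completeSpace_coe

/-- For a `*`-stable contraction `T` with defect operator `D₊ = √(1 - T T*)`, the isometry
`C : H → ℓ²(ℕ, 𝒟₊)`, `(C h)ₙ = D₊ (T*)ⁿ h`, and the right shift `S` on `ℓ²(ℕ, 𝒟₊)`,
one has `T = C* ∘ S ∘ C`: the functional model of `T` as the compression of the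
unilateral shift to the coinvariant subspace `C(H)`. -/
theorem functional_model_star_stable
    {H : Type*} [NormedAddCommGroup H] [InnerProductSpace ℂ H] [CompleteSpace H]
    (T Dp : H →L[ℂ] H) (hT : ‖T‖ ≤ 1)
    (hDp : Dp.IsPositive) (hDp2 : Dp ∘L Dp = 1 - T ∘L adjoint T)
    (hstable : ∀ h : H, Tendsto (fun n : ℕ => ((adjoint T) ^ n) h) atTop (nhds 0))
    (C : H →L[ℂ] lp (fun _ : ℕ => ↥(defectSpace Dp)) 2)
    (hC : ∀ (h : H) (n : ℕ), ((C h) n : H) = Dp (((adjoint T) ^ n) h))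
    (S : lp (fun _ : ℕ => ↥(defectSpace Dp)) 2 →L[ℂ]
         lp (fun _ : ℕ => ↥(defectSpace Dp)) 2)
    (hS0 : ∀ f : lp (fun _ : ℕ => ↥(defectSpace Dp)) 2, (S f) 0 = 0)
    (hS : ∀ (f : lp (fun _ : ℕ => ↥(defectSpace Dp)) 2) (n : ℕ), (S f) (n + 1) = f n) :
    T = adjoint C ∘L (S ∘L C) := by
  have epow : ∀ (x : H) (k : ℕ),
      ((adjoint T) ^ (k + 1)) x = (adjoint T) (((adjoint T) ^ k) x) := by
    intro x k
    rw [pow_succ']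
    rfl
  ext h
  apply ext_inner_right ℂ
  intro g
  simp only [comp_apply]
  rw [adjoint_inner_left]
  -- goal: ⟪T h, g⟫ = ⟪S (C h), C g⟫
  set a : ℕ → ℂ := fun n => ⟪((adjoint T) ^ n) h, ((adjoint T) ^ (n + 1)) g⟫_ℂ with ha_def
  set t : ℕ → ℂ := fun n => ⟪(S (C h)) n, (C g) n⟫_ℂ with ht_def
  have hsa : adjoint Dp = Dp := hDp.isSelfAdjoint.adjoint_eq
  have ht0 : t 0 = 0 := by
    simp [ht_def, hS0 (C h)]
  have htn : ∀ n : ℕ, t (n + 1) = a n - a (n + 1) := by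
    intro n
    have h1 : t (n + 1) = ⟪((C h) n : H), ((C g) (n + 1) : H)⟫_ℂ := by
      rw [ht_def]
      simp only [hS (C h) n]
      rfl
    rw [h1, hC h n, hC g (n + 1)]
    have h2 : ⟪Dp (((adjoint T) ^ n) h), Dp (((adjoint T) ^ (n + 1)) g)⟫_ℂ
        = ⟪((adjoint T) ^ n) h, Dp (Dp (((adjoint T) ^ (n + 1)) g))⟫_ℂ := by
      nth_rewrite 1 [← hsa]
      rw [adjoint_inner_left]
    rw [h2, ← comp_apply Dp Dp, hDp2]
    simp only [sub_apply, one_apply, comp_apply, inner_sub_right]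
    congr 1
    have h3 : ⟪((adjoint T) ^ n) h, T ((adjoint T) (((adjoint T) ^ (n + 1)) g))⟫_ℂ
        = ⟪(adjoint T) (((adjoint T) ^ n) h), (adjoint T) (((adjoint T) ^ (n + 1)) g)⟫_ℂ := by
      rw [← adjoint_adjoint T, adjoint_inner_right, adjoint_adjoint]
    rw [h3, ← epow h n, ← epow g (n + 1)]
  -- the series of inner products sums to the lp inner product
  have hsum : HasSum t ⟪S (C h), C g⟫_ℂ := lp.hasSum_inner (S (C h)) (C g)
  -- partial sums telescope
  have hps : ∀ N : ℕ, ∑ n ∈ Finset.range (N + 1), t n = a 0 - a N := by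
    intro N
    rw [Finset.sum_range_succ']
    simp only [htn, ht0, add_zero]
    exact Finset.sum_range_sub' a N
  -- the telescoping tail tends to 0
  have hlim : Tendsto a atTop (nhds (0 : ℂ)) := by
    have h0 : Tendsto (fun n : ℕ => ((adjoint T) ^ n) ((adjoint T) g)) atTop (nhds 0) :=
      hstable ((adjoint T) g)
    have := Filter.Tendsto.inner (𝕜 := ℂ) (hstable h) h0
    rw [inner_zero_left] at this
    refine this.congr fun n => ?_
    simp only [ha_def]
    rw [pow_succ]
    rfl
  -- conclude
  have h4 : Tendsto (fun N : ℕ => ∑ n ∈ Finset.range (N + 1), t n) atTop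
      (nhds ⟪S (C h), C g⟫_ℂ) :=
    hsum.tendsto_sum_nat.comp (tendsto_add_atTop_nat 1)
  have h5 : Tendsto (fun N : ℕ => ∑ n ∈ Finset.range (N + 1), t n) atTop (nhds (a 0)) := by
    simp only [hps]
    have := (tendsto_const_nhds (x := a 0) (f := atTop (α := ℕ))).sub hlim
    rwa [sub_zero] at this
  have h6 : ⟪S (C h), C g⟫_ℂ = a 0 := tendsto_nhds_unique h4 h5
  have h7 : a 0 = ⟪T h, g⟫_ℂ := by
    simp only [ha_def, zero_add, pow_zero, pow_one, one_apply]
    rw [adjoint_inner_right]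
    rfl
  rw [h6]
  exact h7.symm
end

section
/- Let H be a complex Hilbert space and T : H → H a *-stable contraction, with D = √(1 − T*T), D₊ = √(1 − T T*), 𝒟 = closure(range D), 𝒟₊ = closure(range D₊). Then the multiplication operator by the characteristic function Θ_T, namely M_Θ : ℓ²(ℕ, 𝒟) → ℓ²(ℕ, 𝒟₊) defined coefficientwise by (M_Θ f)ₙ = −T fₙ + Σ_{j=0}^{n−1} D₊ (T*)^{n−1−j} D f_j, is a well-defined linear isometry, and it intertwines the right shifts: M_Θ ∘ S_𝒟 = S_{𝒟₊} ∘ M_Θ. (This expresses that Θ_T is an inner function.) -/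
open ContinuousLinearMap Filter

open scoped ENNReal NNReal

set_option synthInstance.maxHeartbeats 1000000
set_option maxHeartbeats 1000000

private noncomputable def babyl {A : Type*} [Ring A] [Module ℝ A] (a : A) : ℕ → A :=
  fun n => Nat.rec 0 (fun _ y => (2:ℝ)⁻¹ • (a + y * y)) n

private lemma babyl_zero {A : Type*} [Ring A] [Module ℝ A] (a : A) : babyl a 0 = 0 := rfl

private lemma babyl_succ {A : Type*} [Ring A] [Module ℝ A] (a : A) (n : ℕ) :
    babyl a (n + 1) = (2:ℝ)⁻¹ • (a + babyl a n * babyl a n) := rfl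

private noncomputable def csq : ℕ → ℝ :=
  fun n => Nat.rec 0 (fun _ c => (1 + c * c) / 2) n

private lemma csq_zero : csq 0 = 0 := rfl

private lemma csq_succ (n : ℕ) : csq (n + 1) = (1 + csq n * csq n) / 2 := rfl

private lemma csq_props : ∀ n, 0 ≤ csq n ∧ csq n ≤ 1 ∧ csq n ≤ csq (n + 1) := by
  intro n
  induction n with
  | zero => norm_num [csq_zero, csq_succ]
  | succ n ih =>
    obtain ⟨h0, h1, h2⟩ := ih
    refine ⟨by rw [csq_succ]; nlinarith, by rw [csq_succ]; nlinarith, ?_⟩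
    rw [csq_succ, csq_succ]; nlinarith

private lemma csq_mono : Monotone csq :=
  monotone_nat_of_le_succ fun n => (csq_props n).2.2

section Part1

variable {H : Type*} [NormedAddCommGroup H] [InnerProductSpace ℂ H] [CompleteSpace H]

private lemma babyl_norm_le (a : H →L[ℂ] H) (ha : ‖a‖ ≤ 1) :
    ∀ n, ‖babyl a n‖ ≤ csq n := by
  intro n
  induction n with
  | zero => simp [babyl_zero, csq_zero]
  | succ n ih =>
    have hm : ‖babyl a n * babyl a n‖ ≤ ‖babyl a n‖ * ‖babyl a n‖ := norm_mul_le _ _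
    have h0 := (csq_props n).1
    calc ‖babyl a (n+1)‖ = ‖(2:ℝ)⁻¹‖ * ‖a + babyl a n * babyl a n‖ := by
          rw [babyl_succ, norm_smul]
      _ ≤ (2:ℝ)⁻¹ * (‖a‖ + ‖babyl a n * babyl a n‖) := by
          rw [Real.norm_eq_abs, abs_of_nonneg (by norm_num)]
          have := norm_add_le a (babyl a n * babyl a n)
          nlinarith
      _ ≤ csq (n+1) := by rw [csq_succ]; nlinarith [norm_nonneg (babyl a n)]

private lemma babyl_diff_le (a : H →L[ℂ] H) (ha : ‖a‖ ≤ 1) :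
    ∀ n, ‖babyl a (n+1) - babyl a n‖ ≤ csq (n+1) - csq n := by
  intro n
  induction n with
  | zero =>
    simp only [babyl_succ, babyl_zero, csq_succ, csq_zero, mul_zero, zero_mul, add_zero,
      sub_zero]
    rw [norm_smul, Real.norm_eq_abs, abs_of_nonneg (by norm_num : (0:ℝ) ≤ (2:ℝ)⁻¹)]
    nlinarith
  | succ n ih =>
    have key : babyl a (n+2) - babyl a (n+1)
        = (2:ℝ)⁻¹ • (babyl a (n+1) * (babyl a (n+1) - babyl a n)
            + (babyl a (n+1) - babyl a n) * babyl a n) := by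
      rw [babyl_succ a (n+1), babyl_succ a n, ← smul_sub]
      congr 1
      noncomm_ring
    have h1 := babyl_norm_le a ha (n+1)
    have h0 := babyl_norm_le a ha n
    have hc0 := (csq_props n).1
    have hc1 := (csq_props (n+1)).1
    have hmono := (csq_props n).2.2
    have e1 : ‖babyl a (n+1) * (babyl a (n+1) - babyl a n)‖
        ≤ ‖babyl a (n+1)‖ * ‖babyl a (n+1) - babyl a n‖ := norm_mul_le _ _
    have e2 : ‖(babyl a (n+1) - babyl a n) * babyl a n‖
        ≤ ‖babyl a (n+1) - babyl a n‖ * ‖babyl a n‖ := norm_mul_le _ _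
    have tri := norm_add_le (babyl a (n+1) * (babyl a (n+1) - babyl a n))
        ((babyl a (n+1) - babyl a n) * babyl a n)
    rw [key, norm_smul, Real.norm_eq_abs, abs_of_nonneg (by norm_num : (0:ℝ) ≤ (2:ℝ)⁻¹),
      csq_succ (n+1)]
    have hd0 : 0 ≤ ‖babyl a (n+1) - babyl a n‖ := norm_nonneg _
    have hrel : csq (n+1) = (1 + csq n * csq n) / 2 := csq_succ n
    nlinarith [mul_le_mul_of_nonneg_right h1 hd0, mul_le_mul_of_nonneg_left h0 hd0,
      mul_le_mul_of_nonneg_left ih hc1, mul_le_mul_of_nonneg_right ih hc0]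

private lemma babyl_diff_le' (a : H →L[ℂ] H) (ha : ‖a‖ ≤ 1) (n k : ℕ) :
    ‖babyl a (n+k) - babyl a n‖ ≤ csq (n+k) - csq n := by
  induction k with
  | zero => simp
  | succ k ih =>
    have := babyl_diff_le a ha (n+k)
    calc ‖babyl a (n+(k+1)) - babyl a n‖
        ≤ ‖babyl a (n+k+1) - babyl a (n+k)‖ + ‖babyl a (n+k) - babyl a n‖ := by
          rw [show n+(k+1) = n+k+1 by omega]
          exact norm_sub_le_norm_sub_add_norm_sub _ _ _
      _ ≤ csq (n+(k+1)) - csq n := by rw [show n+(k+1) = n+k+1 by omega]; linarith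

private lemma babyl_limit (a : H →L[ℂ] H) (ha : ‖a‖ ≤ 1) (hsa : star a = a) :
    ∃ y : H →L[ℂ] H, Tendsto (babyl a) atTop (nhds y) ∧
      (1 - y) * (1 - y) = 1 - a ∧ (1 - y).IsPositive := by
  -- limit of csq
  have hbdd : BddAbove (Set.range csq) := ⟨1, by rintro _ ⟨n, rfl⟩; exact (csq_props n).2.1⟩
  have hctend : Tendsto csq atTop (nhds (⨆ n, csq n)) := tendsto_atTop_ciSup csq_mono hbdd
  set L := ⨆ n, csq n with hL
  have hcle : ∀ n, csq n ≤ L := fun n => le_ciSup hbdd n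
  have hLle : L ≤ 1 := ciSup_le fun n => (csq_props n).2.1
  -- Cauchy
  have hcauchy : CauchySeq (babyl a) := by
    apply cauchySeq_of_le_tendsto_0 (fun N => L - csq N)
    · intro n m N hn hm
      rcases le_total n m with h | h
      · rw [dist_comm, dist_eq_norm]
        obtain ⟨k, rfl⟩ := Nat.exists_eq_add_of_le h
        calc ‖babyl a (n+k) - babyl a n‖ ≤ csq (n+k) - csq n := babyl_diff_le' a ha n k
          _ ≤ L - csq N := by
              have := hcle (n+k); have := csq_mono hn; linarith
      · rw [dist_eq_norm]
        obtain ⟨k, rfl⟩ := Nat.exists_eq_add_of_le h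
        calc ‖babyl a (m+k) - babyl a m‖ ≤ csq (m+k) - csq m := babyl_diff_le' a ha m k
          _ ≤ L - csq N := by
              have := hcle (m+k); have := csq_mono hm; linarith
    · have : Tendsto (fun N => L - csq N) atTop (nhds (L - L)) :=
        tendsto_const_nhds.sub hctend
      simpa using this
  obtain ⟨y, hy⟩ := cauchySeq_tendsto_of_complete hcauchy
  -- fixed point equation
  have hy1 : Tendsto (fun n => babyl a (n+1)) atTop (nhds y) :=
    hy.comp (tendsto_add_atTop_nat 1)
  have hy2 : Tendsto (fun n => (2:ℝ)⁻¹ • (a + babyl a n * babyl a n)) atTop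
      (nhds ((2:ℝ)⁻¹ • (a + y * y))) :=
    ((tendsto_const_nhds.add (hy.mul hy)).const_smul _)
  have hfix : y = (2:ℝ)⁻¹ • (a + y * y) := by
    refine tendsto_nhds_unique hy1 ?_
    simpa only [babyl_succ] using hy2
  have hyy : y * y = (2:ℝ) • y - a := by
    have := congrArg (fun w => (2:ℝ) • w) hfix
    simp only [smul_smul] at this
    norm_num at this
    rw [this]; abel
  have hsq : (1 - y) * (1 - y) = 1 - a := by
    have expand : (1 - y) * (1 - y) = 1 - y - y + y * y := by noncomm_ring
    rw [expand, hyy, two_smul]; abel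
  -- selfadjointness
  have hself : ∀ n, star (babyl a n) = babyl a n := by
    intro n
    induction n with
    | zero => simp [babyl_zero]
    | succ n ih => rw [babyl_succ, star_smul, star_add, star_mul, ih, hsa, star_trivial]
  have hys : star y = y := by
    refine tendsto_nhds_unique ?_ hy
    have := hy.star
    simpa only [hself] using this
  -- norm bound
  have hyn : ‖y‖ ≤ 1 := by
    refine le_of_tendsto hy.norm (Filter.Eventually.of_forall fun n => ?_)
    exact (babyl_norm_le a ha n).trans (csq_props n).2.1
  refine ⟨y, hy, hsq, ?_⟩
  constructor
  · exact ContinuousLinearMap.isSelfAdjoint_iff_isSymmetric.mp ((IsSelfAdjoint.one (H →L[ℂ] H)).sub hys)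
  · intro x
    have h1 : reApplyInnerSelf (1 - y) x = RCLike.re (inner ℂ (x - y x) x) := by
      simp only [reApplyInnerSelf, ContinuousLinearMap.sub_apply, ContinuousLinearMap.one_apply]
    rw [h1, inner_sub_left]
    have h2 : RCLike.re (inner ℂ x x) = ‖x‖^2 := by
      rw [inner_self_eq_norm_sq]
    have h3 : RCLike.re (inner ℂ (y x) x) ≤ ‖x‖ * ‖x‖ := by
      calc RCLike.re (inner ℂ (y x) x) ≤ ‖(inner ℂ (y x) x)‖ := RCLike.re_le_norm _
        _ ≤ ‖y x‖ * ‖x‖ := norm_inner_le_norm _ _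
        _ ≤ ‖x‖ * ‖x‖ := by
            have := y.le_opNorm x
            have hx0 := norm_nonneg x
            nlinarith [norm_nonneg (y x)]
    simp only [map_sub]
    nlinarith [norm_nonneg x]

private lemma TD_eq_DpT (T D Dp : H →L[ℂ] H) (hT : ‖T‖ ≤ 1)
    (hD : D.IsPositive) (hD2 : D ∘L D = 1 - adjoint T ∘L T)
    (hDp : Dp.IsPositive) (hDp2 : Dp ∘L Dp = 1 - T ∘L adjoint T) :
    T ∘L D = Dp ∘L T := by
  have hTs : ‖adjoint T‖ ≤ 1 := by
    rw [show ‖adjoint T‖ = ‖T‖ from adjoint.norm_map T]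
    exact hT
  set u : H →L[ℂ] H := adjoint T * T with hu
  set v : H →L[ℂ] H := T * adjoint T with hv
  have hun : ‖u‖ ≤ 1 := by
    calc ‖u‖ ≤ ‖adjoint T‖ * ‖T‖ := norm_mul_le _ _
      _ ≤ 1 := by nlinarith [norm_nonneg T, norm_nonneg (adjoint T)]
  have hvn : ‖v‖ ≤ 1 := by
    calc ‖v‖ ≤ ‖T‖ * ‖adjoint T‖ := norm_mul_le _ _
      _ ≤ 1 := by nlinarith [norm_nonneg T, norm_nonneg (adjoint T)]
  have hus : star u = u := by
    rw [hu, star_mul, star_eq_adjoint, star_eq_adjoint, adjoint_adjoint]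
  have hvs : star v = v := by
    rw [hv, star_mul, star_eq_adjoint, star_eq_adjoint, adjoint_adjoint]
  obtain ⟨y, hy, hysq, hypos⟩ := babyl_limit u hun hus
  obtain ⟨z, hz, hzsq, hzpos⟩ := babyl_limit v hvn hvs
  -- intertwining at each stage
  have hTuv : T * u = v * T := by rw [hu, hv, ← mul_assoc]
  have hstage : ∀ n, T * babyl u n = babyl v n * T := by
    intro n
    induction n with
    | zero => simp [babyl_zero]
    | succ n ih =>
      rw [babyl_succ, babyl_succ, mul_smul_comm, smul_mul_assoc, mul_add, add_mul, hTuv]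
      congr 2
      rw [← mul_assoc, ih, mul_assoc, ih, mul_assoc]
  have hTyz : T * y = z * T := by
    exact tendsto_nhds_unique (hy.const_mul T)
      (((hz.mul_const T).congr fun n => (hstage n).symm))
  -- identify D = 1 - y and Dp = 1 - z
  have hDsq : D * D = (1 - y) * (1 - y) := by
    rw [hysq]
    rw [show (D * D : H →L[ℂ] H) = D ∘L D from rfl, hD2]
    rfl
  have hDpsq : Dp * Dp = (1 - z) * (1 - z) := by
    rw [hzsq]
    rw [show (Dp * Dp : H →L[ℂ] H) = Dp ∘L Dp from rfl, hDp2]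
    rfl
  have hDeq : D = 1 - y := by
    have h1 : CFC.sqrt (D * D) = D := CFC.sqrt_unique rfl ((nonneg_iff_isPositive D).mpr hD)
    have h2 : CFC.sqrt ((1-y) * (1-y)) = 1 - y :=
      CFC.sqrt_unique rfl ((nonneg_iff_isPositive _).mpr hypos)
    rw [← h1, ← h2, hDsq]
  have hDpeq : Dp = 1 - z := by
    have h1 : CFC.sqrt (Dp * Dp) = Dp := CFC.sqrt_unique rfl ((nonneg_iff_isPositive Dp).mpr hDp)
    have h2 : CFC.sqrt ((1-z) * (1-z)) = 1 - z :=
      CFC.sqrt_unique rfl ((nonneg_iff_isPositive _).mpr hzpos)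
    rw [← h1, ← h2, hDpsq]
  show T * D = Dp * T
  rw [hDeq, hDpeq, mul_sub, sub_mul, mul_one, one_mul, hTyz]

end Part1

section XSeq

variable {H : Type*} [NormedAddCommGroup H] [InnerProductSpace ℂ H]

/-- The controllability state sequence: `x 0 = 0`, `x (n+1) = A (x n) + B (v n)`. -/
private noncomputable def xseq (A B : H →L[ℂ] H) (v : ℕ → H) : ℕ → H :=
  fun n => Nat.rec 0 (fun k x => A x + B (v k)) n

private lemma xseq_zero (A B : H →L[ℂ] H) (v : ℕ → H) : xseq A B v 0 = 0 := rfl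

private lemma xseq_succ (A B : H →L[ℂ] H) (v : ℕ → H) (n : ℕ) :
    xseq A B v (n + 1) = A (xseq A B v n) + B (v n) := rfl

private lemma xseq_add (A B : H →L[ℂ] H) (v w : ℕ → H) (n : ℕ) :
    xseq A B (fun k => v k + w k) n = xseq A B v n + xseq A B w n := by
  induction n with
  | zero => simp [xseq_zero]
  | succ n ih => rw [xseq_succ, xseq_succ, xseq_succ, ih, map_add, map_add]; abel

private lemma xseq_sub (A B : H →L[ℂ] H) (v w : ℕ → H) (n : ℕ) :
    xseq A B (fun k => v k - w k) n = xseq A B v n - xseq A B w n := by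
  induction n with
  | zero => simp [xseq_zero]
  | succ n ih => rw [xseq_succ, xseq_succ, xseq_succ, ih, map_sub, map_sub]; abel

private lemma xseq_smul (A B : H →L[ℂ] H) (c : ℂ) (v : ℕ → H) (n : ℕ) :
    xseq A B (fun k => c • v k) n = c • xseq A B v n := by
  induction n with
  | zero => simp [xseq_zero]
  | succ n ih => rw [xseq_succ, xseq_succ, ih, map_smul, map_smul, smul_add]

private lemma xseq_shift (A B : H →L[ℂ] H) (v' v : ℕ → H) (h0 : v' 0 = 0)
    (hs : ∀ n, v' (n + 1) = v n) : ∀ n, xseq A B v' (n + 1) = xseq A B v n := by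
  intro n
  induction n with
  | zero => simp [xseq_succ, xseq_zero, h0]
  | succ n ih => rw [xseq_succ A B v' (n+1), ih, hs, xseq_succ]

private lemma xseq_stable (A B : H →L[ℂ] H) (w : ℕ → H) (J : ℕ)
    (hw : ∀ n, J ≤ n → w n = 0) : ∀ k, xseq A B w (J + k) = (A ^ k) (xseq A B w J) := by
  intro k
  induction k with
  | zero => simp
  | succ k ih =>
    have : J + (k + 1) = (J + k) + 1 := by omega
    rw [this, xseq_succ, ih, hw (J + k) (by omega), map_zero, add_zero, pow_succ',
      ContinuousLinearMap.mul_apply]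

private lemma xseq_formula (T D : H →L[ℂ] H) [CompleteSpace H] (v : ℕ → H) (n : ℕ) :
    xseq (ContinuousLinearMap.adjoint T) D v n
      = ∑ j ∈ Finset.range n, ((ContinuousLinearMap.adjoint T) ^ (n - 1 - j)) (D (v j)) := by
  induction n with
  | zero => simp [xseq_zero]
  | succ n ih =>
    rw [xseq_succ, ih, map_sum, Finset.sum_range_succ]
    congr 1
    · refine Finset.sum_congr rfl fun j hj => ?_
      have hj' : j < n := Finset.mem_range.mp hj
      have : n + 1 - 1 - j = (n - 1 - j) + 1 := by omega
      rw [this, pow_succ', ContinuousLinearMap.mul_apply]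
    · have : n + 1 - 1 - n = 0 := by omega
      rw [this, pow_zero, ContinuousLinearMap.one_apply]

end XSeq

section KeyId

variable {H : Type*} [NormedAddCommGroup H] [InnerProductSpace ℂ H] [CompleteSpace H]

local notation "⟪" x ", " y "⟫" => @inner ℂ _ _ x y

/-- The coefficient function of the multiplication operator. -/
private noncomputable def thetaFun (T D Dp : H →L[ℂ] H) (v : ℕ → H) (n : ℕ) : H :=
  -(T (v n)) + Dp (xseq (ContinuousLinearMap.adjoint T) D v n)

private lemma thetaFun_apply (T D Dp : H →L[ℂ] H) (v : ℕ → H) (n : ℕ) :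
    thetaFun T D Dp v n
      = -(T (v n)) + Dp (xseq (ContinuousLinearMap.adjoint T) D v n) := rfl

private lemma key_id (T D Dp : H →L[ℂ] H)
    (hD : D.IsPositive) (hD2 : D ∘L D = 1 - ContinuousLinearMap.adjoint T ∘L T)
    (hDp : Dp.IsPositive) (hDp2 : Dp ∘L Dp = 1 - T ∘L ContinuousLinearMap.adjoint T)
    (hTD : T ∘L D = Dp ∘L T) (f x : H) :
    ‖-(T f) + Dp x‖^2 + ‖ContinuousLinearMap.adjoint T x + D f‖^2 = ‖f‖^2 + ‖x‖^2 := by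
  have hDsym : ∀ a b : H, ⟪D a, b⟫ = ⟪a, D b⟫ := fun a b =>
    hD.1 a b
  have hDpsym : ∀ a b : H, ⟪Dp a, b⟫ = ⟪a, Dp b⟫ := fun a b =>
    hDp.1 a b
  have h1 : ‖T f‖^2 + ‖D f‖^2 = ‖f‖^2 := by
    have e1 : ⟪D f, D f⟫ = ⟪f, (D ∘L D) f⟫ := by
      rw [ContinuousLinearMap.comp_apply]; exact hDsym f (D f)
    have e2 : (D ∘L D) f = f - ContinuousLinearMap.adjoint T (T f) := by
      rw [hD2]; simp [ContinuousLinearMap.sub_apply, ContinuousLinearMap.comp_apply]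
    have e3 : ⟪D f, D f⟫ = ⟪f, f⟫ - ⟪T f, T f⟫ := by
      rw [e1, e2, inner_sub_right, ContinuousLinearMap.adjoint_inner_right]
    have e4 := congrArg RCLike.re e3
    rw [map_sub, inner_self_eq_norm_sq, inner_self_eq_norm_sq, inner_self_eq_norm_sq] at e4
    linarith
  have h2 : ‖ContinuousLinearMap.adjoint T x‖^2 + ‖Dp x‖^2 = ‖x‖^2 := by
    have e1 : ⟪Dp x, Dp x⟫ = ⟪x, (Dp ∘L Dp) x⟫ := by
      rw [ContinuousLinearMap.comp_apply]; exact hDpsym x (Dp x)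
    have e2 : (Dp ∘L Dp) x = x - T (ContinuousLinearMap.adjoint T x) := by
      rw [hDp2]; simp [ContinuousLinearMap.sub_apply, ContinuousLinearMap.comp_apply]
    have e3 : ⟪Dp x, Dp x⟫ = ⟪x, x⟫
        - ⟪ContinuousLinearMap.adjoint T x, ContinuousLinearMap.adjoint T x⟫ := by
      rw [e1, e2, inner_sub_right, ContinuousLinearMap.adjoint_inner_left]
    have e4 := congrArg RCLike.re e3
    rw [map_sub, inner_self_eq_norm_sq, inner_self_eq_norm_sq, inner_self_eq_norm_sq] at e4
    linarith
  have hadj : D ∘L ContinuousLinearMap.adjoint T = ContinuousLinearMap.adjoint T ∘L Dp := by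
    have := congrArg ContinuousLinearMap.adjoint hTD
    rwa [ContinuousLinearMap.adjoint_comp, ContinuousLinearMap.adjoint_comp,
      hD.isSelfAdjoint.adjoint_eq, hDp.isSelfAdjoint.adjoint_eq] at this
  have c1 : ⟪ContinuousLinearMap.adjoint T x, D f⟫ = ⟪Dp x, T f⟫ := by
    calc ⟪ContinuousLinearMap.adjoint T x, D f⟫
        = ⟪D (ContinuousLinearMap.adjoint T x), f⟫ :=
          (hDsym (ContinuousLinearMap.adjoint T x) f).symm
      _ = ⟪ContinuousLinearMap.adjoint T (Dp x), f⟫ := by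
          have := congrArg (fun S : H →L[ℂ] H => S x) hadj
          simp only [ContinuousLinearMap.comp_apply] at this
          rw [this]
      _ = ⟪Dp x, T f⟫ := ContinuousLinearMap.adjoint_inner_left T f (Dp x)
  have h3 : RCLike.re ⟪-(T f), Dp x⟫ + RCLike.re ⟪ContinuousLinearMap.adjoint T x, D f⟫ = 0 := by
    rw [inner_neg_left, map_neg]
    have : RCLike.re ⟪T f, Dp x⟫ = RCLike.re ⟪ContinuousLinearMap.adjoint T x, D f⟫ := by
      rw [inner_re_symm, c1]
    linarith
  rw [norm_add_sq (𝕜 := ℂ), norm_add_sq (𝕜 := ℂ), norm_neg]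
  linarith

private lemma tele (T D Dp : H →L[ℂ] H)
    (hD : D.IsPositive) (hD2 : D ∘L D = 1 - ContinuousLinearMap.adjoint T ∘L T)
    (hDp : Dp.IsPositive) (hDp2 : Dp ∘L Dp = 1 - T ∘L ContinuousLinearMap.adjoint T)
    (hTD : T ∘L D = Dp ∘L T) (v : ℕ → H) :
    ∀ N, (∑ n ∈ Finset.range N, ‖thetaFun T D Dp v n‖^2)
        + ‖xseq (ContinuousLinearMap.adjoint T) D v N‖^2
      = ∑ n ∈ Finset.range N, ‖v n‖^2 := by
  intro N
  induction N with
  | zero => simp [xseq_zero]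
  | succ N ih =>
    rw [Finset.sum_range_succ, Finset.sum_range_succ (f := fun n => ‖v n‖^2)]
    have hk := key_id T D Dp hD hD2 hDp hDp2 hTD (v N) (xseq (ContinuousLinearMap.adjoint T) D v N)
    rw [xseq_succ, thetaFun_apply]
    linarith

end KeyId

/-- For a `*`-stable contraction `T` with defect operators `D = √(1 - T*T)`,
`D₊ = √(1 - T T*)` and defect spaces `𝒟`, `𝒟₊`, the multiplication operator by the
characteristic function, `(M_Θ f)ₙ = -T fₙ + ∑_{j<n} D₊ (T*)^{n-1-j} D f_j`, is a
well-defined linear isometry from `ℓ²(ℕ, 𝒟)` to `ℓ²(ℕ, 𝒟₊)` intertwining the two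
right shifts (`Θ_T` is inner). -/
theorem characteristic_function_inner
    {H : Type*} [NormedAddCommGroup H] [InnerProductSpace ℂ H] [CompleteSpace H]
    (T D Dp : H →L[ℂ] H) (hT : ‖T‖ ≤ 1)
    (hD : D.IsPositive) (hD2 : D ∘L D = 1 - adjoint T ∘L T)
    (hDp : Dp.IsPositive) (hDp2 : Dp ∘L Dp = 1 - T ∘L adjoint T)
    (hstable : ∀ h : H, Tendsto (fun n : ℕ => ((adjoint T) ^ n) h) atTop (nhds 0))
    (SD : lp (fun _ : ℕ => ↥(defectSpace D)) 2 →L[ℂ]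
          lp (fun _ : ℕ => ↥(defectSpace D)) 2)
    (hSD0 : ∀ f : lp (fun _ : ℕ => ↥(defectSpace D)) 2, (SD f) 0 = 0)
    (hSD : ∀ (f : lp (fun _ : ℕ => ↥(defectSpace D)) 2) (n : ℕ), (SD f) (n + 1) = f n)
    (SDp : lp (fun _ : ℕ => ↥(defectSpace Dp)) 2 →L[ℂ]
           lp (fun _ : ℕ => ↥(defectSpace Dp)) 2)
    (hSDp0 : ∀ f : lp (fun _ : ℕ => ↥(defectSpace Dp)) 2, (SDp f) 0 = 0)
    (hSDp : ∀ (f : lp (fun _ : ℕ => ↥(defectSpace Dp)) 2) (n : ℕ), (SDp f) (n + 1) = f n) :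
    ∃ M : lp (fun _ : ℕ => ↥(defectSpace D)) 2 →ₗᵢ[ℂ]
          lp (fun _ : ℕ => ↥(defectSpace Dp)) 2,
      (∀ (f : lp (fun _ : ℕ => ↥(defectSpace D)) 2) (n : ℕ),
        ((M f) n : H)
          = -(T (f n : H)) +
            ∑ j ∈ Finset.range n, Dp (((adjoint T) ^ (n - 1 - j)) (D (f j : H)))) ∧
      ∀ f : lp (fun _ : ℕ => ↥(defectSpace D)) 2, M (SD f) = SDp (M f) := by
  classical
  have hTD : T ∘L D = Dp ∘L T := TD_eq_DpT T D Dp hT hD hD2 hDp hDp2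
  -- membership facts
  have hmemDp : ∀ h : H, Dp h ∈ defectSpace Dp := fun h =>
    Submodule.le_topologicalClosure _ ⟨h, rfl⟩
  have hTmem : ∀ x : H, x ∈ defectSpace D → T x ∈ defectSpace Dp := by
    intro x hx
    have hclosed : IsClosed ((defectSpace Dp : Submodule ℂ H) : Set H) :=
      Submodule.isClosed_topologicalClosure _
    have hsub : defectSpace D ≤ Submodule.comap (T : H →ₗ[ℂ] H) (defectSpace Dp) := by
      refine Submodule.topologicalClosure_minimal _ ?_ ?_
      · rintro y hy
        obtain ⟨h, rfl⟩ := LinearMap.mem_range.mp hy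
        have hpt : T (D h) = Dp (T h) := by
          have := congrArg (fun S : H →L[ℂ] H => S h) hTD
          simpa using this
        have : T (D h) ∈ defectSpace Dp := by rw [hpt]; exact hmemDp (T h)
        simpa [Submodule.mem_comap] using this
      · exact hclosed.preimage T.continuous
    exact hsub hx
  have hgmem : ∀ (f : lp (fun _ : ℕ => ↥(defectSpace D)) 2) (n : ℕ),
      thetaFun T D Dp (fun k => ((f k : ↥(defectSpace D)) : H)) n ∈ defectSpace Dp := by
    intro f n
    exact Submodule.add_mem _ (Submodule.neg_mem _ (hTmem _ (f n).2)) (hmemDp _)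
  -- summability of components of f
  have hrp : ∀ x : ℝ, x ^ ((2:ℝ≥0∞)).toReal = x ^ 2 := fun x => by
    rw [ENNReal.toReal_ofNat, show ((2:ℝ)) = ((2:ℕ):ℝ) by norm_num, Real.rpow_natCast]
  have htwo : (0:ℝ) < ((2:ℝ≥0∞)).toReal := by rw [ENNReal.toReal_ofNat]; norm_num
  have hsum_f : ∀ f : lp (fun _ : ℕ => ↥(defectSpace D)) 2,
      HasSum (fun n => ‖((f n : ↥(defectSpace D)) : H)‖^2) (‖f‖^2) := by
    intro f
    have h := lp.hasSum_norm htwo f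
    simp only [hrp] at h
    simpa only [Submodule.coe_norm] using h
  -- bound on partial sums of the image components
  have hbound : ∀ (f : lp (fun _ : ℕ => ↥(defectSpace D)) 2) (N : ℕ),
      ∑ n ∈ Finset.range N, ‖thetaFun T D Dp (fun k => ((f k : ↥(defectSpace D)) : H)) n‖^2
        ≤ ‖f‖^2 := by
    intro f N
    have ht := tele T D Dp hD hD2 hDp hDp2 hTD (fun k => ((f k : ↥(defectSpace D)) : H)) N
    have hx : (0:ℝ) ≤ ‖xseq (adjoint T) D (fun k => ((f k : ↥(defectSpace D)) : H)) N‖^2 := by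
      positivity
    have hle : ∑ n ∈ Finset.range N, ‖((f n : ↥(defectSpace D)) : H)‖^2 ≤ ‖f‖^2 :=
      sum_le_hasSum _ (fun i _ => by positivity) (hsum_f f)
    linarith
  have hsummable : ∀ f : lp (fun _ : ℕ => ↥(defectSpace D)) 2,
      Summable (fun n => ‖thetaFun T D Dp (fun k => ((f k : ↥(defectSpace D)) : H)) n‖^2) :=
    fun f => summable_of_sum_range_le (fun n => by positivity) (hbound f)
  have hmemlp : ∀ f : lp (fun _ : ℕ => ↥(defectSpace D)) 2,
      Memℓp (fun n => (⟨thetaFun T D Dp (fun k => ((f k : ↥(defectSpace D)) : H)) n,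
        hgmem f n⟩ : ↥(defectSpace Dp))) 2 := by
    intro f
    apply memℓp_gen
    have : (fun n => ‖(⟨thetaFun T D Dp (fun k => ((f k : ↥(defectSpace D)) : H)) n,
        hgmem f n⟩ : ↥(defectSpace Dp))‖ ^ ((2:ℝ≥0∞)).toReal)
        = fun n => ‖thetaFun T D Dp (fun k => ((f k : ↥(defectSpace D)) : H)) n‖^2 := by
      funext n; rw [hrp]; rfl
    rw [this]
    exact hsummable f
  -- the state sequence tends to zero
  have hx0 : ∀ f : lp (fun _ : ℕ => ↥(defectSpace D)) 2,
      Tendsto (fun N => xseq (adjoint T) D (fun k => ((f k : ↥(defectSpace D)) : H)) N)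
        atTop (nhds 0) := by
    intro f
    set v : ℕ → H := fun k => ((f k : ↥(defectSpace D)) : H) with hv
    rw [NormedAddCommGroup.tendsto_nhds_zero]
    intro ε hε
    have hts := (hsum_f f).tendsto_sum_nat
    have hdiff : Tendsto (fun J => ‖f‖^2 - ∑ n ∈ Finset.range J, ‖v n‖^2) atTop (nhds 0) := by
      have := tendsto_const_nhds (x := ‖f‖^2) (f := atTop (α := ℕ)) |>.sub hts
      simpa using this
    obtain ⟨J, hJ⟩ := (hdiff.eventually_lt_const (by positivity : (0:ℝ) < (ε/2)^2)).exists
    set w : ℕ → H := fun n => if n < J then v n else 0 with hw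
    have hw0 : ∀ n, J ≤ n → w n = 0 := fun n hn => by simp [hw, Nat.not_lt.mpr hn]
    have hstab := xseq_stable (adjoint T) D w J hw0
    have hTtend : Tendsto (fun N : ℕ => ‖((adjoint T) ^ (N - J)) (xseq (adjoint T) D w J)‖)
        atTop (nhds 0) := by
      have := ((hstable (xseq (adjoint T) D w J)).comp (tendsto_sub_atTop_nat J)).norm
      simpa using this
    have hN1 := (hTtend.eventually_lt_const (by positivity : (0:ℝ) < ε/2))
    filter_upwards [hN1, eventually_ge_atTop J] with N hN1' hNJ
    have hsplit : xseq (adjoint T) D v N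
        = xseq (adjoint T) D w N + xseq (adjoint T) D (fun k => v k - w k) N := by
      rw [xseq_sub]; abel
    have h1 : ‖xseq (adjoint T) D w N‖ < ε/2 := by
      have he : xseq (adjoint T) D w N = ((adjoint T)^(N-J)) (xseq (adjoint T) D w J) := by
        have := hstab (N - J); rwa [Nat.add_sub_cancel' hNJ] at this
      rw [he]; exact hN1'
    have h2 : ‖xseq (adjoint T) D (fun k => v k - w k) N‖ < ε/2 := by
      have hb := tele T D Dp hD hD2 hDp hDp2 hTD (fun k => v k - w k) N
      have hgpos : (0:ℝ) ≤ ∑ n ∈ Finset.range N, ‖thetaFun T D Dp (fun k => v k - w k) n‖^2 :=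
        Finset.sum_nonneg fun n _ => by positivity
      have hsum_split : ∑ n ∈ Finset.range N, ‖v n - w n‖^2
          = ∑ n ∈ Finset.Ico J N, ‖v n‖^2 := by
        rw [← Finset.sum_range_add_sum_Ico _ hNJ]
        have e0 : ∑ n ∈ Finset.range J, ‖v n - w n‖^2 = 0 :=
          Finset.sum_eq_zero fun n hn => by
            simp [hw, Finset.mem_range.mp hn]
        rw [e0, zero_add]
        refine Finset.sum_congr rfl fun n hn => ?_
        have hn' : J ≤ n := (Finset.mem_Ico.mp hn).1
        simp [hw, Nat.not_lt.mpr hn']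
      have hIco : ∑ n ∈ Finset.Ico J N, ‖v n‖^2
          = ∑ n ∈ Finset.range N, ‖v n‖^2 - ∑ n ∈ Finset.range J, ‖v n‖^2 :=
        Finset.sum_Ico_eq_sub _ hNJ
      have hle : ∑ n ∈ Finset.range N, ‖v n‖^2 ≤ ‖f‖^2 :=
        sum_le_hasSum _ (fun i _ => by positivity) (hsum_f f)
      have hsq : ‖xseq (adjoint T) D (fun k => v k - w k) N‖^2 < (ε/2)^2 := by
        linarith
      nlinarith [norm_nonneg (xseq (adjoint T) D (fun k => v k - w k) N)]
    calc ‖xseq (adjoint T) D v N‖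
        ≤ ‖xseq (adjoint T) D w N‖ + ‖xseq (adjoint T) D (fun k => v k - w k) N‖ := by
          rw [hsplit]; exact norm_add_le _ _
      _ < ε := by linarith
  -- the image components sum to ‖f‖²
  have hHSg : ∀ f : lp (fun _ : ℕ => ↥(defectSpace D)) 2,
      HasSum (fun n => ‖thetaFun T D Dp (fun k => ((f k : ↥(defectSpace D)) : H)) n‖^2)
        (‖f‖^2) := by
    intro f
    have hx2 : Tendsto
        (fun N => ‖xseq (adjoint T) D (fun k => ((f k : ↥(defectSpace D)) : H)) N‖^2)
        atTop (nhds 0) := by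
      have := ((hx0 f).norm.pow 2)
      simpa using this
    have hS : Tendsto (fun N => ∑ n ∈ Finset.range N,
        ‖thetaFun T D Dp (fun k => ((f k : ↥(defectSpace D)) : H)) n‖^2) atTop
        (nhds (‖f‖^2)) := by
      have h' := (hsum_f f).tendsto_sum_nat.sub hx2
      rw [sub_zero] at h'
      refine h'.congr fun N => ?_
      have := tele T D Dp hD hD2 hDp hDp2 hTD (fun k => ((f k : ↥(defectSpace D)) : H)) N
      linarith
    have hsum := hsummable f
    have := tendsto_nhds_unique hsum.hasSum.tendsto_sum_nat hS
    exact this ▸ hsum.hasSum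
  -- build the isometry
  refine ⟨⟨⟨⟨fun f => ⟨fun n => ⟨thetaFun T D Dp (fun k => ((f k : ↥(defectSpace D)) : H)) n,
      hgmem f n⟩, hmemlp f⟩, ?_⟩, ?_⟩, ?_⟩, ?_, ?_⟩
  -- map_add
  · intro f f'
    refine lp.ext (funext fun n => Subtype.ext ?_)
    have hc : (fun k => (((f + f') k : ↥(defectSpace D)) : H))
        = fun k => ((f k : ↥(defectSpace D)) : H) + ((f' k : ↥(defectSpace D)) : H) := by
      funext k
      rw [lp.coeFn_add]
      rfl
    show thetaFun T D Dp (fun k => (((f + f') k : ↥(defectSpace D)) : H)) n = _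
    rw [hc]
    have : ((((⟨fun n => ⟨thetaFun T D Dp (fun k => ((f k : ↥(defectSpace D)) : H)) n,
        hgmem f n⟩, hmemlp f⟩ : lp (fun _ : ℕ => ↥(defectSpace Dp)) 2)
        + ⟨fun n => ⟨thetaFun T D Dp (fun k => ((f' k : ↥(defectSpace D)) : H)) n,
        hgmem f' n⟩, hmemlp f'⟩) n : ↥(defectSpace Dp)) : H)
        = thetaFun T D Dp (fun k => ((f k : ↥(defectSpace D)) : H)) n
          + thetaFun T D Dp (fun k => ((f' k : ↥(defectSpace D)) : H)) n := by
      rw [lp.coeFn_add]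
      rfl
    rw [this, thetaFun_apply, thetaFun_apply, thetaFun_apply, xseq_add, map_add, map_add]
    abel
  -- map_smul
  · intro c f
    refine lp.ext (funext fun n => Subtype.ext ?_)
    have hc : (fun k => (((c • f) k : ↥(defectSpace D)) : H))
        = fun k => c • ((f k : ↥(defectSpace D)) : H) := by
      funext k
      rw [lp.coeFn_smul]
      rfl
    show thetaFun T D Dp (fun k => (((c • f) k : ↥(defectSpace D)) : H)) n = _
    rw [hc]
    have h1 : (((c • (⟨fun n => ⟨thetaFun T D Dp (fun k => ((f k : ↥(defectSpace D)) : H)) n,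
        hgmem f n⟩, hmemlp f⟩ : lp (fun _ : ℕ => ↥(defectSpace Dp)) 2)) n
          : ↥(defectSpace Dp)) : H)
        = c • thetaFun T D Dp (fun k => ((f k : ↥(defectSpace D)) : H)) n := by
      rw [lp.coeFn_smul]
      rfl
    have h2 : thetaFun T D Dp (fun k => c • ((f k : ↥(defectSpace D)) : H)) n
        = c • thetaFun T D Dp (fun k => ((f k : ↥(defectSpace D)) : H)) n := by
      rw [thetaFun_apply, thetaFun_apply, xseq_smul, map_smul, map_smul, smul_add, smul_neg]
    exact h2.trans h1.symm
  -- norm_map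
  · intro f
    show ‖(⟨fun n => ⟨thetaFun T D Dp (fun k => ((f k : ↥(defectSpace D)) : H)) n,
      hgmem f n⟩, hmemlp f⟩ : lp (fun _ : ℕ => ↥(defectSpace Dp)) 2)‖ = ‖f‖
    have hlp := lp.hasSum_norm htwo
      (⟨fun n => ⟨thetaFun T D Dp (fun k => ((f k : ↥(defectSpace D)) : H)) n,
        hgmem f n⟩, hmemlp f⟩ : lp (fun _ : ℕ => ↥(defectSpace Dp)) 2)
    simp only [hrp] at hlp
    have hlp' : HasSum
        (fun n => ‖thetaFun T D Dp (fun k => ((f k : ↥(defectSpace D)) : H)) n‖^2)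
        (‖(⟨fun n => ⟨thetaFun T D Dp (fun k => ((f k : ↥(defectSpace D)) : H)) n,
          hgmem f n⟩, hmemlp f⟩ : lp (fun _ : ℕ => ↥(defectSpace Dp)) 2)‖^2) := hlp
    have := hlp'.unique (hHSg f)
    have hnn1 : (0:ℝ) ≤ ‖(⟨fun n => ⟨thetaFun T D Dp (fun k =>
        ((f k : ↥(defectSpace D)) : H)) n, hgmem f n⟩, hmemlp f⟩
        : lp (fun _ : ℕ => ↥(defectSpace Dp)) 2)‖ := norm_nonneg _
    have hnn2 : (0:ℝ) ≤ ‖f‖ := norm_nonneg _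
    exact (sq_eq_sq₀ hnn1 hnn2).mp this
  -- the coefficient formula
  · intro f n
    show thetaFun T D Dp (fun k => ((f k : ↥(defectSpace D)) : H)) n = _
    rw [thetaFun_apply, xseq_formula, map_sum]
  -- intertwining
  · intro f
    refine lp.ext (funext fun n => Subtype.ext ?_)
    have hcoe0 : ((SD f : lp (fun _ : ℕ => ↥(defectSpace D)) 2) 0 : H) = 0 := by
      rw [hSD0 f]; rfl
    have hcoes : ∀ k, ((SD f : lp (fun _ : ℕ => ↥(defectSpace D)) 2) (k+1) : H)
        = ((f k : ↥(defectSpace D)) : H) := fun k => by rw [hSD f k]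
    match n with
    | 0 =>
      show thetaFun T D Dp (fun k => (((SD f) k : ↥(defectSpace D)) : H)) 0
        = ((SDp _ : lp (fun _ : ℕ => ↥(defectSpace Dp)) 2) 0 : H)
      rw [thetaFun_apply, xseq_zero, hSDp0]
      simp [hcoe0]
    | n + 1 =>
      have hshift := xseq_shift (adjoint T) D
        (fun k => (((SD f) k : ↥(defectSpace D)) : H))
        (fun k => ((f k : ↥(defectSpace D)) : H)) hcoe0 hcoes n
      have key : thetaFun T D Dp (fun k => (((SD f) k : ↥(defectSpace D)) : H)) (n+1)
          = thetaFun T D Dp (fun k => ((f k : ↥(defectSpace D)) : H)) n := by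
        rw [thetaFun_apply, thetaFun_apply, hshift, hcoes n]
      conv_rhs => rw [hSDp]
      exact key
end

section
/- Let H be a complex Hilbert space and T : H → H a *-stable contraction, with D = √(1 − T*T), D₊ = √(1 − T T*), 𝒟 = closure(range D), 𝒟₊ = closure(range D₊). Let U on H ⊕ ℓ²(ℕ, 𝒟) be the isometric dilation U(h, f) = (T h, g), g₀ = D h, g_{n+1} = f_n, and let S be the right shift on ℓ²(ℕ, 𝒟₊). Then the map W : H ⊕ ℓ²(ℕ, 𝒟) → ℓ²(ℕ, 𝒟₊), W(h, f) = C h + M_Θ f, where (C h)ₙ = D₊ (T*)ⁿ h and (M_Θ f)ₙ = −T fₙ + Σ_{j<n} D₊ (T*)^{n−1−j} D f_j, is a surjective linear isometry (unitary) satisfying W ∘ U = S ∘ W. In particular, the minimal isometric dilation of a *-stable contraction is unitarily equivalent to a one-sided shift. -/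
open ContinuousLinearMap Filter

section aux

open Polynomial

set_option maxHeartbeats 1000000 in
/-- The defect operators intertwine the contraction: `T D = D₊ T`. -/
theorem defect_intertwine' {H : Type*} [NormedAddCommGroup H] [InnerProductSpace ℂ H]
    [CompleteSpace H] (T D Dp : H →L[ℂ] H)
    (hD : D.IsPositive) (hD2 : D ∘L D = 1 - adjoint T ∘L T)
    (hDp : Dp.IsPositive) (hDp2 : Dp ∘L Dp = 1 - T ∘L adjoint T) :
    T ∘L D = Dp ∘L T := by
  set A : H →L[ℂ] H := 1 - adjoint T ∘L T with hA
  set B : H →L[ℂ] H := 1 - T ∘L adjoint T with hB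
  have hDsa : star D = D := hD.isSelfAdjoint
  have hDpsa : star Dp = Dp := hDp.isSelfAdjoint
  have hAnn : (0 : H →L[ℂ] H) ≤ A := by
    rw [← hD2]; calc (0:H →L[ℂ] H) ≤ star D * D := star_mul_self_nonneg D
    _ = D ∘L D := by rw [hDsa]; rfl
  have hBnn : (0 : H →L[ℂ] H) ≤ B := by
    rw [← hDp2]; calc (0:H →L[ℂ] H) ≤ star Dp * Dp := star_mul_self_nonneg Dp
    _ = Dp ∘L Dp := by rw [hDpsa]; rfl
  have hTA : T * A = B * T := by
    simp only [hA, hB, mul_sub, sub_mul, mul_one, one_mul, mul_def]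
    rw [ContinuousLinearMap.comp_assoc]
  have hpow : ∀ n : ℕ, T * A ^ n = B ^ n * T := by
    intro n; induction n with
    | zero => simp
    | succ n ih => rw [pow_succ, pow_succ, ← mul_assoc, ih, mul_assoc, hTA, ← mul_assoc]
  have hpoly : ∀ p : ℝ[X], T * aeval A p = aeval B p * T := by
    intro p
    rw [aeval_eq_sum_range, aeval_eq_sum_range, Finset.mul_sum, Finset.sum_mul]
    refine Finset.sum_congr rfl fun i _ => ?_
    rw [mul_smul_comm, smul_mul_assoc, hpow]
  have hAsa : IsSelfAdjoint A := hAnn.isSelfAdjoint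
  have hBsa : IsSelfAdjoint B := hBnn.isSelfAdjoint
  have hsqrt : ∀ (X : H →L[ℂ] H), (0:H →L[ℂ] H) ≤ X →
      cfc Real.sqrt X * cfc Real.sqrt X = X := by
    intro X hX
    rw [← cfc_mul Real.sqrt Real.sqrt X]
    calc cfc (fun x => Real.sqrt x * Real.sqrt x) X = cfc (fun x : ℝ => x) X := by
          apply cfc_congr
          intro x hx
          exact Real.mul_self_sqrt (spectrum_nonneg_of_nonneg hX hx)
    _ = X := cfc_id' ℝ X
  have hDeq : D = cfc Real.sqrt A := by
    have h1 : CFC.sqrt A = D := CFC.sqrt_unique (by rw [← hD2]; rfl)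
      ((ContinuousLinearMap.nonneg_iff_isPositive D).mpr hD)
    have h2 : CFC.sqrt A = cfc Real.sqrt A :=
      CFC.sqrt_unique (hsqrt A hAnn) (cfc_nonneg fun x _ => Real.sqrt_nonneg x)
    rw [← h1, h2]
  have hDpeq : Dp = cfc Real.sqrt B := by
    have h1 : CFC.sqrt B = Dp := CFC.sqrt_unique (by rw [← hDp2]; rfl)
      ((ContinuousLinearMap.nonneg_iff_isPositive Dp).mpr hDp)
    have h2 : CFC.sqrt B = cfc Real.sqrt B :=
      CFC.sqrt_unique (hsqrt B hBnn) (cfc_nonneg fun x _ => Real.sqrt_nonneg x)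
    rw [← h1, h2]
  rcases subsingleton_or_nontrivial H with htriv | hnt
  · exact Subsingleton.elim _ _
  set M0 : ℝ := max ‖A‖ ‖B‖ with hM0
  have hspecA : ∀ x ∈ spectrum ℝ A, x ∈ Set.Icc (0:ℝ) M0 := by
    intro x hx
    refine ⟨spectrum_nonneg_of_nonneg hAnn hx, ?_⟩
    calc x ≤ |x| := le_abs_self x
    _ ≤ ‖A‖ := spectrum.norm_le_norm_of_mem hx
    _ ≤ M0 := le_max_left _ _
  have hspecB : ∀ x ∈ spectrum ℝ B, x ∈ Set.Icc (0:ℝ) M0 := by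
    intro x hx
    refine ⟨spectrum_nonneg_of_nonneg hBnn hx, ?_⟩
    calc x ≤ |x| := le_abs_self x
    _ ≤ ‖B‖ := spectrum.norm_le_norm_of_mem hx
    _ ≤ M0 := le_max_right _ _
  have key : ‖T * cfc Real.sqrt A - cfc Real.sqrt B * T‖ = 0 := by
    have hle : ∀ ε : ℝ, 0 < ε → ‖T * cfc Real.sqrt A - cfc Real.sqrt B * T‖ ≤ 0 + ε := by
      intro ε hε
      set ε' : ℝ := ε / (2 * ‖T‖ + 1) with hε'def
      have hTpos : (0:ℝ) < 2 * ‖T‖ + 1 := by positivity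
      have hε' : 0 < ε' := div_pos hε hTpos
      obtain ⟨p, hp⟩ := exists_polynomial_near_of_continuousOn 0 M0 Real.sqrt
        Real.continuous_sqrt.continuousOn ε' hε'
      have hbound : ∀ (X : H →L[ℂ] H), IsSelfAdjoint X →
          (∀ x ∈ spectrum ℝ X, x ∈ Set.Icc (0:ℝ) M0) →
          ‖cfc Real.sqrt X - Polynomial.aeval X p‖ ≤ ε' := by
        intro X hXsa hXspec
        have h1 : cfc Real.sqrt X - Polynomial.aeval X p
            = cfc (fun x => Real.sqrt x - p.eval x) X := by
          rw [cfc_sub Real.sqrt (fun x => p.eval x) X Real.continuous_sqrt.continuousOn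
            (Polynomial.continuous p).continuousOn, cfc_polynomial p X hXsa]
        rw [h1]
        refine norm_cfc_le hε'.le fun x hx => ?_
        have := hp x (hXspec x hx)
        rw [Real.norm_eq_abs, abs_sub_comm]
        exact this.le
      have hsplit : T * cfc Real.sqrt A - cfc Real.sqrt B * T
          = T * (cfc Real.sqrt A - Polynomial.aeval A p)
            + (Polynomial.aeval B p - cfc Real.sqrt B) * T := by
        rw [mul_sub, sub_mul, hpoly p]; abel
      calc ‖T * cfc Real.sqrt A - cfc Real.sqrt B * T‖
          ≤ ‖T * (cfc Real.sqrt A - Polynomial.aeval A p)‖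
            + ‖(Polynomial.aeval B p - cfc Real.sqrt B) * T‖ := by
            rw [hsplit]; exact norm_add_le _ _
        _ ≤ ‖T‖ * ε' + ε' * ‖T‖ := by
            refine add_le_add ?_ ?_
            · exact (norm_mul_le _ _).trans
                (mul_le_mul_of_nonneg_left (hbound A hAsa hspecA) (norm_nonneg T))
            · refine (norm_mul_le _ _).trans ?_
              have h2 : ‖Polynomial.aeval B p - cfc Real.sqrt B‖ ≤ ε' := by
                rw [norm_sub_rev]; exact hbound B hBsa hspecB
              exact mul_le_mul_of_nonneg_right h2 (norm_nonneg T)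
        _ ≤ (2 * ‖T‖ + 1) * ε' := by nlinarith [norm_nonneg T, hε'.le]
        _ = ε := by rw [hε'def]; field_simp
        _ = 0 + ε := (zero_add ε).symm
    have h0 : ‖T * cfc Real.sqrt A - cfc Real.sqrt B * T‖ ≤ 0 :=
      le_of_forall_pos_le_add hle
    exact le_antisymm h0 (norm_nonneg _)
  have : T * cfc Real.sqrt A - cfc Real.sqrt B * T = 0 := norm_eq_zero.mp key
  have h := sub_eq_zero.mp this
  rw [← hDeq, ← hDpeq] at h
  exact h

/-- norm squared of an `ℓ²` element as a sum. -/
theorem lp_hasSum_sq {G : ℕ → Type*} [∀ i, NormedAddCommGroup (G i)]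
    (f : lp G 2) : HasSum (fun n => ‖f n‖ ^ 2) (‖f‖ ^ 2) := by
  have h2 : (0:ℝ) < (2 : ENNReal).toReal := by norm_num
  have h := lp.hasSum_norm h2 f
  have e : ∀ x : ℝ, x ^ ((2:ENNReal).toReal) = x ^ 2 := by
    intro x
    rw [show ((2:ENNReal).toReal) = ((2:ℕ):ℝ) by norm_num, Real.rpow_natCast]
  simpa only [e] using h

/-- the energy identity for a single step. -/
theorem energy_step {H : Type*} [NormedAddCommGroup H] [InnerProductSpace ℂ H]
    [CompleteSpace H] (T D Dp : H →L[ℂ] H)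
    (hD2 : D ∘L D = 1 - adjoint T ∘L T) (hDp2 : Dp ∘L Dp = 1 - T ∘L adjoint T)
    (hDadj : adjoint D = D) (hDpadj : adjoint Dp = Dp)
    (hint : T ∘L D = Dp ∘L T) (y z : H) :
    ‖Dp y - T z‖ ^ 2 + ‖adjoint T y + D z‖ ^ 2 = ‖y‖ ^ 2 + ‖z‖ ^ 2 := by
  have hDD : ∀ x, D (D x) = x - adjoint T (T x) := fun x => by
    have h := ContinuousLinearMap.ext_iff.mp hD2 x
    simpa using h
  have hDpDp : ∀ x, Dp (Dp x) = x - T (adjoint T x) := fun x => by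
    have h := ContinuousLinearMap.ext_iff.mp hDp2 x
    simpa using h
  have hintp : ∀ x, T (D x) = Dp (T x) := fun x => ContinuousLinearMap.ext_iff.mp hint x
  have e1 : ‖Dp y‖ ^ 2 + ‖adjoint T y‖ ^ 2 = ‖y‖ ^ 2 := by
    have a1 := adjoint_inner_left Dp (Dp y) y
    rw [hDpadj] at a1
    have a2 : (inner ℂ y (Dp (Dp y)) : ℂ)
        = inner ℂ y y - inner ℂ (adjoint T y) (adjoint T y) := by
      rw [hDpDp, inner_sub_right]
      congr 1
      exact (adjoint_inner_left T (adjoint T y) y).symm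
    have a3 := congrArg (RCLike.re (K := ℂ)) (a1.trans a2)
    rw [map_sub, inner_self_eq_norm_sq, inner_self_eq_norm_sq,
      inner_self_eq_norm_sq] at a3
    linarith
  have e2 : ‖T z‖ ^ 2 + ‖D z‖ ^ 2 = ‖z‖ ^ 2 := by
    have a1 := adjoint_inner_left D (D z) z
    rw [hDadj] at a1
    have a2 : (inner ℂ z (D (D z)) : ℂ) = inner ℂ z z - inner ℂ (T z) (T z) := by
      rw [hDD, inner_sub_right]
      congr 1
      exact adjoint_inner_right T z (T z)
    have a3 := congrArg (RCLike.re (K := ℂ)) (a1.trans a2)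
    rw [map_sub, inner_self_eq_norm_sq, inner_self_eq_norm_sq,
      inner_self_eq_norm_sq] at a3
    linarith
  have e3 : (inner ℂ (Dp y) (T z) : ℂ) = inner ℂ (adjoint T y) (D z) := by
    have a1 := adjoint_inner_left Dp (T z) y
    rw [hDpadj] at a1
    calc (inner ℂ (Dp y) (T z) : ℂ) = inner ℂ y (Dp (T z)) := a1
    _ = inner ℂ y (T (D z)) := by rw [← hintp]
    _ = inner ℂ (adjoint T y) (D z) := (adjoint_inner_left T (D z) y).symm
  have hsub := norm_sub_sq (𝕜 := ℂ) (Dp y) (T z)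
  have hadd := norm_add_sq (𝕜 := ℂ) (adjoint T y) (D z)
  have e3re := congrArg (RCLike.re (K := ℂ)) e3
  rw [hsub, hadd]
  linarith

end aux

set_option maxHeartbeats 4000000 in
/-- For a `*`-stable contraction `T`, with the isometric dilation `U` on `H ⊕₂ ℓ²(ℕ, 𝒟)`,
the right shift `S` on `ℓ²(ℕ, 𝒟₊)`, the embedding `C` and the characteristic-function
multiplication operator `M_Θ`, the map `W(h, f) = C h + M_Θ f` is a unitary (surjective
linear isometry) from `H ⊕₂ ℓ²(ℕ, 𝒟)` onto `ℓ²(ℕ, 𝒟₊)` with `W ∘ U = S ∘ W`: the minimal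
isometric dilation of a `*`-stable contraction is unitarily equivalent to a one-sided
shift. -/
theorem dilation_unitarily_equivalent_to_shift
    {H : Type*} [NormedAddCommGroup H] [InnerProductSpace ℂ H] [CompleteSpace H]
    (T D Dp : H →L[ℂ] H) (hT : ‖T‖ ≤ 1)
    (hD : D.IsPositive) (hD2 : D ∘L D = 1 - adjoint T ∘L T)
    (hDp : Dp.IsPositive) (hDp2 : Dp ∘L Dp = 1 - T ∘L adjoint T)
    (hstable : ∀ h : H, Tendsto (fun n : ℕ => ((adjoint T) ^ n) h) atTop (nhds 0))
    (U : WithLp 2 (H × lp (fun _ : ℕ => ↥(defectSpace D)) 2) →L[ℂ]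
         WithLp 2 (H × lp (fun _ : ℕ => ↥(defectSpace D)) 2))
    (hU : ∀ (h : H) (f : lp (fun _ : ℕ => ↥(defectSpace D)) 2),
        ((WithLp.equiv 2 _) (U ((WithLp.equiv 2 _).symm (h, f)))).1 = T h ∧
        ((((WithLp.equiv 2 _) (U ((WithLp.equiv 2 _).symm (h, f)))).2 0 : H) = D h) ∧
        ∀ n : ℕ, ((WithLp.equiv 2 _) (U ((WithLp.equiv 2 _).symm (h, f)))).2 (n + 1) = f n)
    (S : lp (fun _ : ℕ => ↥(defectSpace Dp)) 2 →L[ℂ]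
         lp (fun _ : ℕ => ↥(defectSpace Dp)) 2)
    (hS0 : ∀ f : lp (fun _ : ℕ => ↥(defectSpace Dp)) 2, (S f) 0 = 0)
    (hS : ∀ (f : lp (fun _ : ℕ => ↥(defectSpace Dp)) 2) (n : ℕ), (S f) (n + 1) = f n)
    (C : H →L[ℂ] lp (fun _ : ℕ => ↥(defectSpace Dp)) 2)
    (hC : ∀ (h : H) (n : ℕ), ((C h) n : H) = Dp (((adjoint T) ^ n) h))
    (M : lp (fun _ : ℕ => ↥(defectSpace D)) 2 →L[ℂ]
         lp (fun _ : ℕ => ↥(defectSpace Dp)) 2)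
    (hM : ∀ (f : lp (fun _ : ℕ => ↥(defectSpace D)) 2) (n : ℕ),
      ((M f) n : H)
        = -(T (f n : H)) +
          ∑ j ∈ Finset.range n, Dp (((adjoint T) ^ (n - 1 - j)) (D (f j : H)))) :
    ∃ W : WithLp 2 (H × lp (fun _ : ℕ => ↥(defectSpace D)) 2) ≃ₗᵢ[ℂ]
          lp (fun _ : ℕ => ↥(defectSpace Dp)) 2,
      (∀ (h : H) (f : lp (fun _ : ℕ => ↥(defectSpace D)) 2),
        W ((WithLp.equiv 2 _).symm (h, f)) = C h + M f) ∧
      ∀ x : WithLp 2 (H × lp (fun _ : ℕ => ↥(defectSpace D)) 2),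
        W (U x) = S (W x) := by
  classical
  haveI hDc : CompleteSpace ↥(defectSpace D) := by
    have h : IsClosed ((defectSpace D : Set H)) := Submodule.isClosed_topologicalClosure _
    exact h.completeSpace_coe
  haveI hDpc : CompleteSpace ↥(defectSpace Dp) := by
    have h : IsClosed ((defectSpace Dp : Set H)) := Submodule.isClosed_topologicalClosure _
    exact h.completeSpace_coe
  set E' := WithLp 2 (H × lp (fun _ : ℕ => ↥(defectSpace D)) 2) with hE'
  set F' := lp (fun _ : ℕ => ↥(defectSpace Dp)) 2 with hF'
  -- basic operator identities
  have hint : T ∘L D = Dp ∘L T := defect_intertwine' T D Dp hD hD2 hDp hDp2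
  have hDadj : adjoint D = D := by
    rw [← ContinuousLinearMap.star_eq_adjoint]; exact hD.isSelfAdjoint
  have hDpadj : adjoint Dp = Dp := by
    rw [← ContinuousLinearMap.star_eq_adjoint]; exact hDp.isSelfAdjoint
  have hDD : ∀ x, D (D x) = x - adjoint T (T x) := fun x => by
    have h := ContinuousLinearMap.ext_iff.mp hD2 x
    simpa using h
  have hintp : ∀ x, T (D x) = Dp (T x) := fun x => ContinuousLinearMap.ext_iff.mp hint x
  have hintp' : ∀ x, adjoint T (Dp x) = D (adjoint T x) := by
    intro x
    have h : adjoint (T ∘L D) = adjoint (Dp ∘L T) := by rw [hint]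
    rw [ContinuousLinearMap.adjoint_comp, ContinuousLinearMap.adjoint_comp, hDadj, hDpadj] at h
    exact (ContinuousLinearMap.ext_iff.mp h x).symm
  have hTT : ∀ x, adjoint T (T x) = x - D (D x) := fun x => by rw [hDD x]; abel
  -- membership
  have hmemD : ∀ y : H, D y ∈ defectSpace D := fun y =>
    Submodule.le_topologicalClosure _ (LinearMap.mem_range_self (D : H →ₗ[ℂ] H) y)
  -- the map W as a linear map
  let Wlin : E' →ₗ[ℂ] F' :=
    { toFun := fun x => C x.fst + M x.snd
      map_add' := fun x y => by
        show C (x.fst + y.fst) + M (x.snd + y.snd) = _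
        rw [map_add, map_add]; abel
      map_smul' := fun c x => by
        show C (c • x.fst) + M (c • x.snd) = _
        rw [map_smul, map_smul, ← smul_add]; rfl }
  have hWlin : ∀ x : E', Wlin x = C x.fst + M x.snd := fun _ => rfl
  -- coordinates of W
  have coordW : ∀ (a : H) (b : lp (fun _ : ℕ => ↥(defectSpace D)) 2) (n : ℕ),
      (((C a + M b : F') n : H))
        = Dp (((adjoint T) ^ n) a) + (-(T ((b n : H)))
          + ∑ j ∈ Finset.range n, Dp (((adjoint T) ^ (n - 1 - j)) (D ((b j : H))))) := by
    intro a b n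
    have h1 : (C a + M b : F') n = (C a) n + (M b) n := by rw [lp.coeFn_add]; rfl
    rw [h1, Submodule.coe_add, hC, hM]
  -- the discrete evolution
  let K : H → (ℕ → H) → ℕ → H := fun h0 u n =>
    Nat.rec h0 (fun m km => adjoint T km + D (u m)) n
  have K0 : ∀ h0 u, K h0 u 0 = h0 := fun _ _ => rfl
  have Ksucc : ∀ h0 u n, K h0 u (n + 1) = adjoint T (K h0 u n) + D (u n) := fun _ _ _ => rfl
  have core : ∀ (h0 : H) (u : ℕ → H) (N : ℕ),
      ‖K h0 u N‖ ^ 2 + ∑ n ∈ Finset.range N, ‖Dp (K h0 u n) - T (u n)‖ ^ 2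
        = ‖h0‖ ^ 2 + ∑ n ∈ Finset.range N, ‖u n‖ ^ 2 := by
    intro h0 u N
    induction N with
    | zero => simp [K0]
    | succ N ih =>
      rw [Finset.sum_range_succ, Finset.sum_range_succ, Ksucc]
      have he := energy_step T D Dp hD2 hDp2 hDadj hDpadj hint (K h0 u N) (u N)
      linarith
  have corebound : ∀ (h0 : H) (u : ℕ → H) (N : ℕ),
      ‖K h0 u N‖ ^ 2 ≤ ‖h0‖ ^ 2 + ∑ n ∈ Finset.range N, ‖u n‖ ^ 2 := by
    intro h0 u N
    have h := core h0 u N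
    have hnn : (0:ℝ) ≤ ∑ n ∈ Finset.range N, ‖Dp (K h0 u n) - T (u n)‖ ^ 2 :=
      Finset.sum_nonneg fun _ _ => sq_nonneg _
    linarith
  have Ksplit : ∀ (h0 : H) (u : ℕ → H) (m P : ℕ),
      K h0 u (m + P) = ((adjoint T) ^ P) (K h0 u m) + K 0 (fun p => u (m + p)) P := by
    intro h0 u m P
    induction P with
    | zero => simp [K0]
    | succ P ih =>
      have h1 : m + (P + 1) = (m + P) + 1 := rfl
      rw [h1, Ksucc, ih, map_add, Ksucc]
      have h2 : adjoint T (((adjoint T) ^ P) (K h0 u m))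
          = ((adjoint T) ^ (P+1)) (K h0 u m) := by
        rw [pow_succ']; rfl
      rw [h2]
      abel
  -- limit of K along any ℓ² input
  have klim : ∀ (h : H) (f : lp (fun _ : ℕ => ↥(defectSpace D)) 2),
      Tendsto (fun N => ‖K h (fun n => ((f n : H))) N‖) atTop (nhds 0) := by
    intro h f
    set u := fun n => ((f n : H)) with hu
    have husum : HasSum (fun n => ‖u n‖ ^ 2) (‖f‖ ^ 2) := lp_hasSum_sq f
    have husummable : Summable (fun n => ‖u n‖ ^ 2) := husum.summable
    rw [Metric.tendsto_atTop]
    intro ε hε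
    have hε2 : 0 < ε / 2 := by linarith
    -- choose the cutoff m
    have htail : Tendsto (fun m => ∑' p, ‖u (p + m)‖ ^ 2) atTop (nhds 0) :=
      tendsto_sum_nat_add fun n => ‖u n‖ ^ 2
    have hev : ∀ᶠ m in atTop, ∑' p, ‖u (p + m)‖ ^ 2 < (ε / 2) ^ 2 := by
      have := htail.eventually (eventually_lt_nhds (by positivity : (0:ℝ) < (ε/2)^2))
      simpa using this
    obtain ⟨m, hm⟩ := hev.exists
    -- the head tends to zero
    have hstab : Tendsto (fun N : ℕ => ((adjoint T) ^ (N - m)) (K h u m)) atTop (nhds 0) :=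
      (hstable (K h u m)).comp (tendsto_sub_atTop_nat m)
    rw [Metric.tendsto_atTop] at hstab
    obtain ⟨N1, hN1⟩ := hstab (ε / 2) hε2
    refine ⟨max m N1, fun N hN => ?_⟩
    have hNm : m ≤ N := le_trans (le_max_left _ _) hN
    have hNN1 : N1 ≤ N := le_trans (le_max_right _ _) hN
    have hsplit : K h u N
        = ((adjoint T) ^ (N - m)) (K h u m) + K 0 (fun p => u (m + p)) (N - m) := by
      have := Ksplit h u m (N - m)
      rwa [Nat.add_sub_cancel' hNm] at this
    have htailbound : ‖K 0 (fun p => u (m + p)) (N - m)‖ < ε / 2 := by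
      have hb := corebound 0 (fun p => u (m + p)) (N - m)
      have hle : ∑ n ∈ Finset.range (N - m), ‖u (m + n)‖ ^ 2 ≤ ∑' p, ‖u (p + m)‖ ^ 2 := by
        have hsummable2 : Summable (fun p => ‖u (p + m)‖ ^ 2) :=
          (summable_nat_add_iff m).mpr husummable
        have := Summable.sum_le_tsum (Finset.range (N - m)) (fun i _ => sq_nonneg _) hsummable2
        calc ∑ n ∈ Finset.range (N - m), ‖u (m + n)‖ ^ 2
            = ∑ n ∈ Finset.range (N - m), ‖u (n + m)‖ ^ 2 := by
              refine Finset.sum_congr rfl fun i _ => ?_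
              rw [Nat.add_comm]
        _ ≤ ∑' p, ‖u (p + m)‖ ^ 2 := this
      have hlt : ‖K 0 (fun p => u (m + p)) (N - m)‖ ^ 2 < (ε / 2) ^ 2 := by
        have h0 : ‖(0 : H)‖ ^ 2 = 0 := by simp
        calc ‖K 0 (fun p => u (m + p)) (N - m)‖ ^ 2
            ≤ ‖(0:H)‖ ^ 2 + ∑ n ∈ Finset.range (N - m), ‖u (m + n)‖ ^ 2 := hb
        _ = ∑ n ∈ Finset.range (N - m), ‖u (m + n)‖ ^ 2 := by rw [h0, zero_add]
        _ ≤ ∑' p, ‖u (p + m)‖ ^ 2 := hle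
        _ < (ε / 2) ^ 2 := hm
      nlinarith [norm_nonneg (K 0 (fun p => u (m + p)) (N - m))]
    have hheadbound : ‖((adjoint T) ^ (N - m)) (K h u m)‖ < ε / 2 := by
      have := hN1 N hNN1
      rwa [dist_eq_norm, sub_zero] at this
    rw [dist_eq_norm, sub_zero, Real.norm_eq_abs, abs_of_nonneg (norm_nonneg _), hsplit]
    calc ‖((adjoint T) ^ (N - m)) (K h u m) + K 0 (fun p => u (m + p)) (N - m)‖
        ≤ ‖((adjoint T) ^ (N - m)) (K h u m)‖ + ‖K 0 (fun p => u (m + p)) (N - m)‖ :=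
          norm_add_le _ _
    _ < ε / 2 + ε / 2 := add_lt_add hheadbound htailbound
    _ = ε := by ring
  -- the isometry property
  have keyiso : ∀ (h : H) (f : lp (fun _ : ℕ => ↥(defectSpace D)) 2),
      ‖(C h + M f : F')‖ ^ 2 = ‖h‖ ^ 2 + ‖f‖ ^ 2 := by
    intro h f
    set u := fun n => ((f n : H)) with hu
    set g : F' := C h + M f with hg
    set k := K h u with hk
    -- the coordinates of g in terms of k
    have kform : ∀ n, k n = ((adjoint T) ^ n) h
        + ∑ j ∈ Finset.range n, ((adjoint T) ^ (n - 1 - j)) (D (u j)) := by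
      intro n
      induction n with
      | zero => simp [hk, K0]
      | succ n ih =>
        have h1 : adjoint T (((adjoint T) ^ n) h) = ((adjoint T) ^ (n + 1)) h := by
          rw [pow_succ']; rfl
        have hks : k (n + 1) = adjoint T (k n) + D (u n) := Ksucc h u n
        rw [hks, ih, map_add, map_sum, Finset.sum_range_succ]
        have h2 : ∀ j ∈ Finset.range n,
            adjoint T (((adjoint T) ^ (n - 1 - j)) (D (u j)))
              = ((adjoint T) ^ (n + 1 - 1 - j)) (D (u j)) := by
          intro j hj
          have hj' : j < n := Finset.mem_range.mp hj
          have h3 : n + 1 - 1 - j = (n - 1 - j) + 1 := by omega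
          rw [h3, pow_succ']; rfl
        rw [Finset.sum_congr rfl h2]
        have h4 : n + 1 - 1 - n = 0 := by omega
        rw [h4, pow_zero, ContinuousLinearMap.one_apply, h1]
        abel
    have gk : ∀ n, ((g n : H)) = Dp (k n) - T (u n) := by
      intro n
      rw [hg, coordW h f n, kform n, map_add, map_sum]
      abel
    -- two limits for the partial sums
    have hgsum : HasSum (fun n => ‖(g n : H)‖ ^ 2) (‖g‖ ^ 2) := by
      have := lp_hasSum_sq g
      simpa using this
    have hA : Tendsto (fun N => ∑ n ∈ Finset.range N, ‖(g n : H)‖ ^ 2) atTop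
        (nhds (‖g‖ ^ 2)) := hgsum.tendsto_sum_nat
    have husum : HasSum (fun n => ‖u n‖ ^ 2) (‖f‖ ^ 2) := lp_hasSum_sq f
    have hBfun : ∀ N, ∑ n ∈ Finset.range N, ‖(g n : H)‖ ^ 2
        = ‖h‖ ^ 2 + ∑ n ∈ Finset.range N, ‖u n‖ ^ 2 - ‖k N‖ ^ 2 := by
      intro N
      have hcore := core h u N
      have he : ∀ n ∈ Finset.range N, ‖(g n : H)‖ ^ 2 = ‖Dp (k n) - T (u n)‖ ^ 2 := by
        intro n _; rw [gk n]
      rw [Finset.sum_congr rfl he]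
      linarith
    have hB : Tendsto (fun N => ∑ n ∈ Finset.range N, ‖(g n : H)‖ ^ 2) atTop
        (nhds (‖h‖ ^ 2 + ‖f‖ ^ 2)) := by
      have h1 : Tendsto (fun N => ‖h‖ ^ 2 + ∑ n ∈ Finset.range N, ‖u n‖ ^ 2 - ‖k N‖ ^ 2)
          atTop (nhds (‖h‖ ^ 2 + ‖f‖ ^ 2 - 0)) := by
        refine Tendsto.sub ?_ ?_
        · exact (tendsto_const_nhds.add husum.tendsto_sum_nat)
        · have hk2 := (klim h f).pow 2
          simpa using hk2
      rw [sub_zero] at h1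
      exact h1.congr fun N => (hBfun N).symm
    exact tendsto_nhds_unique hA hB
  -- norm preservation on E'
  have WnormE : ∀ x : E', ‖Wlin x‖ = ‖x‖ := by
    intro x
    have h1 : ‖Wlin x‖ ^ 2 = ‖x‖ ^ 2 := by
      rw [WithLp.prod_norm_sq_eq_of_L2, hWlin]
      exact keyiso x.fst x.snd
    calc ‖Wlin x‖ = Real.sqrt (‖Wlin x‖ ^ 2) := (Real.sqrt_sq (norm_nonneg _)).symm
    _ = Real.sqrt (‖x‖ ^ 2) := by rw [h1]
    _ = ‖x‖ := Real.sqrt_sq (norm_nonneg _)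
  let Wiso : E' →ₗᵢ[ℂ] F' := ⟨Wlin, WnormE⟩
  -- surjectivity
  have hRclosed : IsClosed ((LinearMap.range Wlin : Submodule ℂ F') : Set F') := by
    have h : IsClosed (Set.range ⇑Wlin) := Wiso.isometry.isClosedEmbedding.isClosed_range
    rw [LinearMap.coe_range]
    exact h
  haveI : CompleteSpace ↥(LinearMap.range Wlin) := hRclosed.completeSpace_coe
  have hSsingle : ∀ (n : ℕ) (d : ↥(defectSpace Dp)),
      S (lp.single 2 n d) = lp.single 2 (n + 1) d := by
    intro n d
    apply lp.ext
    funext m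
    cases m with
    | zero =>
      rw [hS0]
      exact (lp.single_apply_ne (E := fun _ : ℕ => ↥(defectSpace Dp)) 2 (n+1) d
        (show (0:ℕ) ≠ n + 1 by omega)).symm
    | succ m =>
      rw [hS]
      by_cases hmn : m = n
      · subst hmn
        rw [lp.single_apply_self (E := fun _ : ℕ => ↥(defectSpace Dp)) 2 m d,
          lp.single_apply_self (E := fun _ : ℕ => ↥(defectSpace Dp)) 2 (m+1) d]
      · rw [lp.single_apply_ne (E := fun _ : ℕ => ↥(defectSpace Dp)) 2 n d hmn,
          lp.single_apply_ne (E := fun _ : ℕ => ↥(defectSpace Dp)) 2 (n+1) d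
            (show m + 1 ≠ n + 1 by omega)]
  have hSl : ∀ (w : F') (n : ℕ), (adjoint S w) n = w (n + 1) := by
    intro w n
    refine ext_inner_left ℂ fun d => ?_
    calc (inner ℂ d ((adjoint S w) n) : ℂ)
        = inner ℂ (lp.single 2 n d) (adjoint S w) := (lp.inner_single_left n d (adjoint S w)).symm
    _ = inner ℂ (S (lp.single 2 n d)) w := adjoint_inner_right S (lp.single 2 n d) w
    _ = inner ℂ (lp.single 2 (n+1) d) w := by rw [hSsingle n d]
    _ = inner ℂ d (w (n + 1)) := lp.inner_single_left (n+1) d w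
  have hSlpow : ∀ (j : ℕ) (w : F') (n : ℕ), (((adjoint S) ^ j) w) n = w (n + j) := by
    intro j
    induction j with
    | zero => intro w n; simp
    | succ j ih =>
      intro w n
      have h1 : ((adjoint S) ^ (j+1)) w = ((adjoint S) ^ j) (adjoint S w) := by
        rw [pow_succ]; rfl
      have h2 : n + j + 1 = n + (j + 1) := by omega
      rw [h1, ih, hSl, h2]
  have hCadj : ∀ w : F', adjoint C w = Dp ((w 0 : H)) + T (adjoint C (adjoint S w)) := by
    intro w
    refine ext_inner_left ℂ fun y => ?_
    have hterm : (fun n => (inner ℂ ((C y) n) (w n) : ℂ))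
        = fun n => (inner ℂ (Dp (((adjoint T) ^ n) y)) ((w n : H)) : ℂ) := by
      funext n
      rw [Submodule.coe_inner, hC]
    have hsummable : Summable (fun n => (inner ℂ (Dp (((adjoint T) ^ n) y)) ((w n : H)) : ℂ)) := by
      have := (lp.hasSum_inner (𝕜 := ℂ) (C y) w).summable
      rwa [hterm] at this
    have h1 : (inner ℂ y (adjoint C w) : ℂ) = inner ℂ (C y) w :=
      adjoint_inner_right C y w
    have h2 : (inner ℂ (C y) w : ℂ) = ∑' n, inner ℂ (Dp (((adjoint T) ^ n) y)) ((w n : H)) := by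
      rw [lp.inner_eq_tsum, hterm]
    have h3 : ∑' n, (inner ℂ (Dp (((adjoint T) ^ n) y)) ((w n : H)) : ℂ)
        = inner ℂ (Dp y) ((w 0 : H))
          + ∑' n, (inner ℂ (Dp (((adjoint T) ^ (n+1)) y)) ((w (n+1) : H)) : ℂ) := by
      have := Summable.tsum_eq_zero_add hsummable
      simpa using this
    have h4 : ∑' n, (inner ℂ (Dp (((adjoint T) ^ (n+1)) y)) ((w (n+1) : H)) : ℂ)
        = inner ℂ (C (adjoint T y)) (adjoint S w) := by
      rw [lp.inner_eq_tsum]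
      congr 1
      funext n
      have hp : ((adjoint T) ^ (n+1)) y = ((adjoint T) ^ n) (adjoint T y) := by
        rw [pow_succ]; rfl
      rw [Submodule.coe_inner, hC, hSl, hp]
    have h5 : (inner ℂ (C (adjoint T y)) (adjoint S w) : ℂ)
        = inner ℂ (adjoint T y) (adjoint C (adjoint S w)) :=
      (adjoint_inner_right C (adjoint T y) (adjoint S w)).symm
    have h6 : (inner ℂ (adjoint T y) (adjoint C (adjoint S w)) : ℂ)
        = inner ℂ y (T (adjoint C (adjoint S w))) :=
      adjoint_inner_left T (adjoint C (adjoint S w)) y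
    have h7 : (inner ℂ (Dp y) ((w 0 : H)) : ℂ) = inner ℂ y (Dp ((w 0 : H))) := by
      have a1 := adjoint_inner_left Dp ((w 0 : H)) y
      rwa [hDpadj] at a1
    rw [h1, h2, h3, h4, h5, h6, h7, ← inner_add_right]
  -- the orthogonal complement of the range is trivial
  have horthzero : ∀ g : F', g ∈ (LinearMap.range Wlin)ᗮ → g = 0 := by
    intro g hg
    have hCg : ∀ y : H, (inner ℂ (C y) g : ℂ) = 0 := by
      intro y
      refine (Submodule.mem_orthogonal _ g).mp hg (C y) ?_
      refine LinearMap.mem_range.mpr ⟨(WithLp.equiv 2 _).symm (y, 0), ?_⟩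
      show C y + M 0 = C y
      rw [map_zero, add_zero]
    have hMg : ∀ f : lp (fun _ : ℕ => ↥(defectSpace D)) 2, (inner ℂ (M f) g : ℂ) = 0 := by
      intro f
      refine (Submodule.mem_orthogonal _ g).mp hg (M f) ?_
      refine LinearMap.mem_range.mpr ⟨(WithLp.equiv 2 _).symm (0, f), ?_⟩
      show C 0 + M f = M f
      rw [map_zero, zero_add]
    set v : ℕ → H := fun j => adjoint C (((adjoint S) ^ j) g) with hv
    have hv0 : v 0 = 0 := by
      refine ext_inner_left ℂ fun y => ?_
      have h1 : ((adjoint S) ^ 0) g = g := by rw [pow_zero]; rfl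
      calc (inner ℂ y (v 0) : ℂ) = inner ℂ (C y) g := by
            rw [hv]; simp only [h1]; exact adjoint_inner_right C y g
      _ = 0 := hCg y
      _ = inner ℂ y (0 : H) := (inner_zero_right y).symm
    have hvdecomp : ∀ j, v j = Dp ((g j : H)) + T (v (j + 1)) := by
      intro j
      have h1 := hCadj (((adjoint S) ^ j) g)
      have h2 : ((((adjoint S) ^ j) g) 0 : H) = (g j : H) := by
        rw [hSlpow]; rw [Nat.zero_add]
      have h3 : adjoint S (((adjoint S) ^ j) g) = ((adjoint S) ^ (j+1)) g := by
        rw [pow_succ']; rfl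
      rw [h2, h3] at h1
      exact h1
    -- orthogonality against M gives the key relation
    have hO2 : ∀ j, D (adjoint T ((g j : H))) = D (D (v (j + 1))) := by
      intro j
      have hO2' : ∀ dd : ↥(defectSpace D),
          (inner ℂ (T ((dd : H))) ((g j : H)) : ℂ) = inner ℂ (D ((dd : H))) (v (j + 1)) := by
        intro dd
        set uu : lp (fun _ : ℕ => ↥(defectSpace D)) 2 := lp.single 2 j dd with huu
        have ucoe : ∀ i, ((uu i : H)) = if i = j then ((dd : H)) else 0 := by
          intro i
          by_cases hij : i = j
          · subst hij
            rw [huu, lp.single_apply_self (E := fun _ : ℕ => ↥(defectSpace D)) 2 i dd, if_pos rfl]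
          · rw [huu, lp.single_apply_ne (E := fun _ : ℕ => ↥(defectSpace D)) 2 j dd hij, if_neg hij]
            rfl
        set a : ℕ → ℂ := fun n => inner ℂ (((M uu) n : H)) ((g n : H)) with ha
        have hasum : HasSum a (inner ℂ (M uu) g : ℂ) := by
          have h := lp.hasSum_inner (𝕜 := ℂ) (M uu) g
          have he : (fun n => (inner ℂ ((M uu) n) (g n) : ℂ)) = a := by
            funext n; rw [ha, Submodule.coe_inner]
          rwa [he] at h
        have hasum0 : HasSum a 0 := by rwa [hMg uu] at hasum
        have haj : ∀ n, n < j → a n = 0 := by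
          intro n hn
          have hcoe : ((M uu) n : H) = 0 := by
            rw [hM]
            have h1 : ((uu n : H)) = 0 := by rw [ucoe]; rw [if_neg (by omega)]
            have h2 : ∀ i ∈ Finset.range n, Dp (((adjoint T) ^ (n - 1 - i)) (D ((uu i : H)))) = 0 := by
              intro i hi
              have hi' : i < n := Finset.mem_range.mp hi
              have : ((uu i : H)) = 0 := by rw [ucoe]; rw [if_neg (by omega)]
              rw [this, map_zero, map_zero, map_zero]
            rw [h1, Finset.sum_congr rfl h2, map_zero, neg_zero, Finset.sum_const_zero, add_zero]
          show (inner ℂ (((M uu) n : H)) ((g n : H)) : ℂ) = 0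
          rw [hcoe, inner_zero_left]
        have hajj : a j = -(inner ℂ (T ((dd : H))) ((g j : H)) : ℂ) := by
          have hcoe : ((M uu) j : H) = -(T ((dd : H))) := by
            rw [hM]
            have h1 : ((uu j : H)) = (dd : H) := by rw [ucoe, if_pos rfl]
            have h2 : ∀ i ∈ Finset.range j, Dp (((adjoint T) ^ (j - 1 - i)) (D ((uu i : H)))) = 0 := by
              intro i hi
              have hi' : i < j := Finset.mem_range.mp hi
              have : ((uu i : H)) = 0 := by rw [ucoe]; rw [if_neg (by omega)]
              rw [this, map_zero, map_zero, map_zero]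
            rw [h1, Finset.sum_congr rfl h2, Finset.sum_const_zero, add_zero]
          show (inner ℂ (((M uu) j : H)) ((g j : H)) : ℂ) = -(inner ℂ (T ((dd : H))) ((g j : H)) : ℂ)
          rw [hcoe, inner_neg_left]
        have hatail : ∀ m, a (m + (j + 1))
            = inner ℂ ((C (D ((dd : H)))) m) ((((adjoint S) ^ (j+1)) g) m) := by
          intro m
          have hcoe : ((M uu) (m + (j + 1)) : H) = Dp (((adjoint T) ^ m) (D ((dd : H)))) := by
            rw [hM]
            have h1 : ((uu (m + (j + 1)) : H)) = 0 := by rw [ucoe]; rw [if_neg (by omega)]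
            have hjmem : j ∈ Finset.range (m + (j + 1)) := Finset.mem_range.mpr (by omega)
            have h2 : ∑ i ∈ Finset.range (m + (j + 1)),
                Dp (((adjoint T) ^ (m + (j + 1) - 1 - i)) (D ((uu i : H))))
                = Dp (((adjoint T) ^ m) (D ((dd : H)))) := by
              rw [Finset.sum_eq_single_of_mem j hjmem]
              · have : m + (j + 1) - 1 - j = m := by omega
                rw [this, ucoe, if_pos rfl]
              · intro i _ hij
                have : ((uu i : H)) = 0 := by rw [ucoe]; rw [if_neg hij]
                rw [this, map_zero, map_zero, map_zero]
            rw [h1, map_zero, neg_zero, zero_add, h2]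
          show (inner ℂ (((M uu) (m + (j + 1)) : H)) ((g (m + (j + 1)) : H)) : ℂ) = _
          rw [hcoe, Submodule.coe_inner, hC, hSlpow]
        have hsplit := (Summable.sum_add_tsum_nat_add (f := a) (j + 1) hasum0.summable).symm
        rw [hasum0.tsum_eq] at hsplit
        have hhead : ∑ n ∈ Finset.range (j + 1), a n = -(inner ℂ (T ((dd : H))) ((g j : H)) : ℂ) := by
          rw [Finset.sum_eq_single_of_mem j (Finset.mem_range.mpr (by omega))]
          · exact hajj
          · intro n hn hnj
            have hn' := Finset.mem_range.mp hn
            exact haj n (by omega)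
        have htail : ∑' m, a (m + (j + 1)) = inner ℂ (D ((dd : H))) (v (j + 1)) := by
          have h1 : ∑' m, a (m + (j + 1))
              = ∑' m, (inner ℂ ((C (D ((dd : H)))) m) ((((adjoint S) ^ (j+1)) g) m) : ℂ) := by
            congr 1; funext m; exact hatail m
          rw [h1, ← lp.inner_eq_tsum]
          exact (adjoint_inner_right C (D ((dd : H))) (((adjoint S) ^ (j+1)) g)).symm
        rw [hhead, htail] at hsplit
        linear_combination hsplit
      refine ext_inner_left ℂ fun y => ?_
      have h := hO2' ⟨D y, hmemD y⟩
      simp only [Submodule.coe_mk] at h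
      have hL : (inner ℂ (T (D y)) ((g j : H)) : ℂ) = inner ℂ y (D (adjoint T ((g j : H)))) := by
        calc (inner ℂ (T (D y)) ((g j : H)) : ℂ)
            = inner ℂ (D y) (adjoint T ((g j : H))) := (adjoint_inner_right T (D y) ((g j : H))).symm
        _ = inner ℂ y (D (adjoint T ((g j : H)))) := by
            have a1 := adjoint_inner_left D (adjoint T ((g j : H))) y
            rw [hDadj] at a1
            exact a1
      have hR : (inner ℂ (D (D y)) (v (j + 1)) : ℂ) = inner ℂ y (D (D (v (j + 1)))) := by
        calc (inner ℂ (D (D y)) (v (j + 1)) : ℂ)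
            = inner ℂ (D y) (D (v (j + 1))) := by
              have a1 := adjoint_inner_left D (v (j+1)) (D y)
              rw [hDadj] at a1
              exact a1
        _ = inner ℂ y (D (D (v (j + 1)))) := by
              have a1 := adjoint_inner_left D (D (v (j+1))) y
              rw [hDadj] at a1
              exact a1
      rw [← hL, ← hR]
      exact h
    have hvrec : ∀ j, v (j + 1) = adjoint T (v j) := by
      intro j
      have h : adjoint T (v j) = v (j + 1) := by
        rw [hvdecomp j, map_add, hintp' ((g j : H)), hO2 j, hTT]
        abel
      exact h.symm
    have hvzero : ∀ j, v j = 0 := by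
      intro j
      induction j with
      | zero => exact hv0
      | succ j ih => rw [hvrec j, ih, map_zero]
    have hDpgj : ∀ j, Dp ((g j : H)) = 0 := by
      intro j
      have h := hvdecomp j
      rw [hvzero j, hvzero (j + 1), map_zero, add_zero] at h
      exact h.symm
    have hzero : ∀ x : H, x ∈ defectSpace Dp → Dp x = 0 → x = 0 := by
      intro x hx hx0
      have hle : LinearMap.range (Dp : H →ₗ[ℂ] H) ≤ LinearMap.ker ((innerSL ℂ x : H →L[ℂ] ℂ) : H →ₗ[ℂ] ℂ) := by
        rintro z ⟨y, rfl⟩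
        have : (inner ℂ x (Dp y) : ℂ) = 0 := by
          calc (inner ℂ x (Dp y) : ℂ) = inner ℂ (Dp x) y := by
                have a1 := adjoint_inner_left Dp y x
                rw [hDpadj] at a1
                exact a1.symm
          _ = 0 := by rw [hx0, inner_zero_left]
        simpa [LinearMap.mem_ker] using this
      have hclosed : IsClosed ((LinearMap.ker ((innerSL ℂ x : H →L[ℂ] ℂ) : H →ₗ[ℂ] ℂ) : Submodule ℂ H) : Set H) := by
        have := ContinuousLinearMap.isClosed_ker (innerSL ℂ x)
        exact this
      have hle2 : defectSpace Dp ≤ LinearMap.ker ((innerSL ℂ x : H →L[ℂ] ℂ) : H →ₗ[ℂ] ℂ) := by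
        show (LinearMap.range (Dp : H →ₗ[ℂ] H)).topologicalClosure ≤ _
        exact Submodule.topologicalClosure_minimal _ hle hclosed
      have hxx : (inner ℂ x x : ℂ) = 0 := by
        have := hle2 hx
        simpa [LinearMap.mem_ker] using this
      exact inner_self_eq_zero.mp hxx
    apply lp.ext
    funext n
    have h := hzero ((g n : H)) (g n).2 (hDpgj n)
    apply Subtype.ext
    simpa using h
  have horth : (LinearMap.range Wlin)ᗮ = ⊥ := by
    rw [Submodule.eq_bot_iff]
    exact horthzero
  have hRtop : LinearMap.range Wlin = ⊤ := Submodule.orthogonal_eq_bot_iff.mp horth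
  have hsurj : Function.Surjective Wlin := LinearMap.range_eq_top.mp hRtop
  have hsurj' : Function.Surjective Wiso := hsurj
  -- the intertwining relation
  have hWU : ∀ x : E', (C (U x).fst + M (U x).snd : F') = S (C x.fst + M x.snd) := by
    intro x
    obtain ⟨hU1, hU2, hU3⟩ := hU x.fst x.snd
    have hU1' : (U x).fst = T x.fst := hU1
    have hU2' : (((U x).snd 0 : H)) = D x.fst := hU2
    have hU3' : ∀ n, (U x).snd (n + 1) = x.snd n := hU3
    apply lp.ext
    funext n
    apply Subtype.ext
    show (((C (U x).fst + M (U x).snd : F') n : H)) = ((S (C x.fst + M x.snd : F') n : H))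
    rw [coordW]
    cases n with
    | zero =>
      have hr : ((S (C x.fst + M x.snd : F') 0 : H)) = 0 := by rw [hS0]; rfl
      rw [hr]
      simp only [Finset.range_zero, Finset.sum_empty, add_zero, pow_zero,
        ContinuousLinearMap.one_apply]
      rw [hU1', hU2', hintp x.fst]
      abel
    | succ n =>
      have hr : ((S (C x.fst + M x.snd : F') (n+1) : H)) = (((C x.fst + M x.snd : F') n : H)) := by
        rw [hS]
      rw [hr, coordW]
      rw [Finset.sum_range_succ']
      have h2 : ∀ i ∈ Finset.range n,
          Dp (((adjoint T) ^ (n + 1 - 1 - (i + 1))) (D (((U x).snd (i+1) : H))))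
            = Dp (((adjoint T) ^ (n - 1 - i)) (D ((x.snd i : H)))) := by
        intro i _
        have he : n + 1 - 1 - (i + 1) = n - 1 - i := by omega
        rw [he, hU3' i]
      rw [Finset.sum_congr rfl h2]
      have h3 : n + 1 - 1 - 0 = n := by omega
      rw [h3, hU2', hU3' n, hU1']
      have h4 : ((adjoint T) ^ (n+1)) (T x.fst) = ((adjoint T) ^ n) (adjoint T (T x.fst)) := by
        rw [pow_succ]; rfl
      rw [h4, hTT x.fst, map_sub, map_sub, hDD x.fst]
      abel
  -- assemble
  refine ⟨LinearIsometryEquiv.ofSurjective Wiso hsurj', ?_, ?_⟩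
  · intro h f
    have hcoe : ∀ z : E', LinearIsometryEquiv.ofSurjective Wiso hsurj' z = C z.fst + M z.snd := by
      intro z
      rw [LinearIsometryEquiv.coe_ofSurjective]
      rfl
    exact hcoe ((WithLp.equiv 2 _).symm (h, f))
  · intro x
    have hcoe : ∀ z : E', LinearIsometryEquiv.ofSurjective Wiso hsurj' z = C z.fst + M z.snd := by
      intro z
      rw [LinearIsometryEquiv.coe_ofSurjective]
      rfl
    rw [hcoe (U x), hcoe x]
    exact hWU x
end

section
/- Let H be a complex Hilbert space and T : H → H a *-stable contraction (‖T‖ ≤ 1 and (T*)ⁿ h → 0 for all h), with D = √(1 − T*T) and 𝒟 = closure(range D). Then for every f ∈ ℓ²(ℕ, 𝒟) the partial sums Σ_{j=0}^{n−1} (T*)^{n−1−j} D f_j converge to 0 in norm as n → ∞. (This is the convergence to zero of the first component in the limit formula Ŵ = lim_{n} R*_{n−1} ⋯ R*_0 for the unitary onto the functional model.) -/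
open ContinuousLinearMap Filter

section Aux

variable {H : Type*} [NormedAddCommGroup H] [InnerProductSpace ℂ H] [CompleteSpace H]

/-- The column `[T; D]` is isometric: `‖Tv‖² + ‖Dv‖² = ‖v‖²`. -/
lemma col_isometry (T D : H →L[ℂ] H) (hDsa : adjoint D = D)
    (hD2 : D ∘L D = 1 - adjoint T ∘L T) (v : H) :
    ‖T v‖ ^ 2 + ‖D v‖ ^ 2 = ‖v‖ ^ 2 := by
  have h1 : (inner ℂ (D v) (D v) : ℂ) = inner ℂ v (D (D v)) := by
    nth_rewrite 1 [← hDsa]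
    exact adjoint_inner_left D (D v) v
  have h2 : D (D v) = v - adjoint T (T v) := by
    have := congrArg (fun A : H →L[ℂ] H => A v) hD2
    simpa using this
  have h3 : (inner ℂ v (adjoint T (T v)) : ℂ) = inner ℂ (T v) (T v) :=
    adjoint_inner_right T v (T v)
  have : (inner ℂ (D v) (D v) : ℂ) = inner ℂ v v - inner ℂ (T v) (T v) := by
    rw [h1, h2, inner_sub_right, h3]
  have hre := congrArg (RCLike.re (K := ℂ)) this
  rw [map_sub, inner_self_eq_norm_sq, inner_self_eq_norm_sq, inner_self_eq_norm_sq] at hre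
  linarith

/-- The row `[T*, D]` is a contraction: `‖T*u + Dx‖² ≤ ‖u‖² + ‖x‖²`. -/
lemma row_contraction (T D : H →L[ℂ] H) (hDsa : adjoint D = D)
    (hD2 : D ∘L D = 1 - adjoint T ∘L T) (u x : H) :
    ‖adjoint T u + D x‖ ^ 2 ≤ ‖u‖ ^ 2 + ‖x‖ ^ 2 := by
  set v := adjoint T u + D x with hv
  have h1 : (inner ℂ v v : ℂ) = inner ℂ v (adjoint T u) + inner ℂ v (D x) := by
    conv_lhs => rw [show (inner ℂ v v : ℂ) = inner ℂ v (adjoint T u + D x) from rfl]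
    rw [inner_add_right]
  have h2 : (inner ℂ v (adjoint T u) : ℂ) = inner ℂ (T v) u := adjoint_inner_right T v u
  have h3 : (inner ℂ v (D x) : ℂ) = inner ℂ (D v) x := by
    conv_lhs => rw [← hDsa]
    exact adjoint_inner_right D v x
  have hre : ‖v‖ ^ 2 = RCLike.re (inner ℂ (T v) u : ℂ) + RCLike.re (inner ℂ (D v) x : ℂ) := by
    rw [← inner_self_eq_norm_sq (𝕜 := ℂ) v, h1, h2, h3, map_add]
  have hb1 : RCLike.re (inner ℂ (T v) u : ℂ) ≤ ‖T v‖ * ‖u‖ := re_inner_le_norm (T v) u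
  have hb2 : RCLike.re (inner ℂ (D v) x : ℂ) ≤ ‖D v‖ * ‖x‖ := re_inner_le_norm (D v) x
  have hiso := col_isometry T D hDsa hD2 v
  nlinarith [sq_nonneg (‖T v‖ - ‖u‖), sq_nonneg (‖D v‖ - ‖x‖)]

/-- Key quadratic estimate on the partial sums. -/
lemma sum_sq_bound (T D : H →L[ℂ] H) (hDsa : adjoint D = D)
    (hD2 : D ∘L D = 1 - adjoint T ∘L T) (x : ℕ → H) :
    ∀ n : ℕ, ‖∑ j ∈ Finset.range n, ((adjoint T) ^ (n - 1 - j)) (D (x j))‖ ^ 2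
      ≤ ∑ j ∈ Finset.range n, ‖x j‖ ^ 2 := by
  intro n
  induction n with
  | zero => simp
  | succ n ih =>
    have hsplit : ∑ j ∈ Finset.range (n + 1), ((adjoint T) ^ (n + 1 - 1 - j)) (D (x j))
        = adjoint T (∑ j ∈ Finset.range n, ((adjoint T) ^ (n - 1 - j)) (D (x j))) + D (x n) := by
      rw [Finset.sum_range_succ, map_sum]
      congr 1
      · refine Finset.sum_congr rfl fun j hj => ?_
        have hj' := Finset.mem_range.mp hj
        have he : n + 1 - 1 - j = (n - 1 - j) + 1 := by omega
        rw [he, pow_succ', ContinuousLinearMap.mul_apply]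
      · simp
    rw [hsplit, Finset.sum_range_succ]
    have := row_contraction T D hDsa hD2
      (∑ j ∈ Finset.range n, ((adjoint T) ^ (n - 1 - j)) (D (x j))) (x n)
    linarith

end Aux

/-- For a `*`-stable contraction `T` with defect operator `D = √(1 - T*T)` and defect
space `𝒟`, for every `f ∈ ℓ²(ℕ, 𝒟)` the partial sums `∑_{j<n} (T*)^{n-1-j} D f_j`
converge to `0` in norm as `n → ∞` (the vanishing of the first component in the limit
formula `Ŵ = lim Rⁿ*⋯R₀*`). -/
theorem first_component_tendsto_zero
    {H : Type*} [NormedAddCommGroup H] [InnerProductSpace ℂ H] [CompleteSpace H]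
    (T D : H →L[ℂ] H) (hT : ‖T‖ ≤ 1)
    (hD : D.IsPositive) (hD2 : D ∘L D = 1 - adjoint T ∘L T)
    (hstable : ∀ h : H, Tendsto (fun n : ℕ => ((adjoint T) ^ n) h) atTop (nhds 0)) :
    ∀ f : lp (fun _ : ℕ => ↥(defectSpace D)) 2,
      Tendsto
        (fun n : ℕ => ∑ j ∈ Finset.range n, ((adjoint T) ^ (n - 1 - j)) (D (f j : H)))
        atTop (nhds 0) := by
  have hDsa : adjoint D = D := by
    have := hD.isSelfAdjoint
    rwa [isSelfAdjoint_iff, star_eq_adjoint] at this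
  intro f
  rw [NormedAddCommGroup.tendsto_nhds_zero]
  intro ε hε
  -- summability of squared norms
  set g : ℕ → ℝ := fun j => ‖(f j : H)‖ ^ 2 with hg
  have hgsum : Summable g := by
    have h2 : (0 : ℝ) < (2 : ENNReal).toReal := by norm_num
    have := (lp.memℓp f).summable h2
    simpa [g, ENNReal.toReal_ofNat, Real.rpow_natCast] using this
  have hgnn : ∀ j, 0 ≤ g j := fun j => sq_nonneg _
  -- choose N with small tail
  have htail : Tendsto (fun i => ∑' k, g (k + i)) atTop (nhds 0) := tendsto_sum_nat_add g
  have hδ : (0 : ℝ) < (ε / 2) ^ 2 := by positivity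
  obtain ⟨N, hN⟩ := (htail.eventually (eventually_lt_nhds hδ)).exists
  -- the head tends to 0
  have hhead : Tendsto
      (fun n : ℕ => ∑ j ∈ Finset.range N, ((adjoint T) ^ (n - 1 - j)) (D (f j : H)))
      atTop (nhds 0) := by
    have : ∀ j ∈ Finset.range N, Tendsto
        (fun n : ℕ => ((adjoint T) ^ (n - 1 - j)) (D (f j : H))) atTop (nhds 0) := by
      intro j _
      have hcomp := (hstable (D (f j : H))).comp (tendsto_sub_atTop_nat (1 + j))
      have heq : (fun n : ℕ => ((adjoint T) ^ (n - 1 - j)) (D (f j : H)))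
          = (fun m : ℕ => ((adjoint T) ^ m) (D (f j : H))) ∘ (fun n : ℕ => n - (1 + j)) := by
        funext n
        simp [Function.comp, Nat.sub_sub]
      rw [heq]
      exact hcomp
    have := tendsto_finset_sum (Finset.range N)
      (fun j hj => this j hj)
    simpa using this
  have hhead' : ∀ᶠ n : ℕ in atTop,
      ‖∑ j ∈ Finset.range N, ((adjoint T) ^ (n - 1 - j)) (D (f j : H))‖ < ε / 2 := by
    have := (NormedAddCommGroup.tendsto_nhds_zero.mp hhead) (ε / 2) (by positivity)
    exact this
  filter_upwards [hhead', eventually_ge_atTop N] with n hn1 hn2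
  -- split the sum
  have hsplit : ∑ j ∈ Finset.range n, ((adjoint T) ^ (n - 1 - j)) (D (f j : H))
      = (∑ j ∈ Finset.range N, ((adjoint T) ^ (n - 1 - j)) (D (f j : H)))
        + ∑ j ∈ Finset.Ico N n, ((adjoint T) ^ (n - 1 - j)) (D (f j : H)) := by
    exact (Finset.sum_range_add_sum_Ico _ hn2).symm
  -- bound the tail
  have htl : ‖∑ j ∈ Finset.Ico N n, ((adjoint T) ^ (n - 1 - j)) (D (f j : H))‖ ^ 2
      ≤ ∑ j ∈ Finset.Ico N n, g j := by
    rw [Finset.sum_Ico_eq_sum_range, Finset.sum_Ico_eq_sum_range]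
    have hre : ∀ j ∈ Finset.range (n - N),
        ((adjoint T) ^ (n - 1 - (N + j))) (D ((f (N + j) : H)))
          = ((adjoint T) ^ (n - N - 1 - j)) (D ((f (N + j) : H))) := by
      intro j hj
      have : n - 1 - (N + j) = n - N - 1 - j := by omega
      rw [this]
    rw [Finset.sum_congr rfl hre]
    exact sum_sq_bound T D hDsa hD2 (fun k => (f (N + k) : H)) (n - N)
  have htl2 : ∑ j ∈ Finset.Ico N n, g j ≤ ∑' k, g (k + N) := by
    rw [Finset.sum_Ico_eq_sum_range]
    have : ∑ j ∈ Finset.range (n - N), g (N + j)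
        = ∑ j ∈ Finset.range (n - N), (fun k => g (k + N)) j := by
      refine Finset.sum_congr rfl fun j _ => ?_
      simp [Nat.add_comm]
    rw [this]
    exact Summable.sum_le_tsum _ (fun k _ => hgnn _) ((summable_nat_add_iff N).mpr hgsum)
  have htl3 : ‖∑ j ∈ Finset.Ico N n, ((adjoint T) ^ (n - 1 - j)) (D (f j : H))‖ < ε / 2 := by
    have hsq : ‖∑ j ∈ Finset.Ico N n, ((adjoint T) ^ (n - 1 - j)) (D (f j : H))‖ ^ 2
        < (ε / 2) ^ 2 := lt_of_le_of_lt (le_trans htl htl2) hN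
    exact lt_of_pow_lt_pow_left₀ 2 (by positivity) hsq
  calc ‖∑ j ∈ Finset.range n, ((adjoint T) ^ (n - 1 - j)) (D (f j : H))‖
      ≤ ‖∑ j ∈ Finset.range N, ((adjoint T) ^ (n - 1 - j)) (D (f j : H))‖
        + ‖∑ j ∈ Finset.Ico N n, ((adjoint T) ^ (n - 1 - j)) (D (f j : H))‖ := by
        rw [hsplit]; exact norm_add_le _ _
    _ < ε / 2 + ε / 2 := add_lt_add hn1 htl3
    _ = ε := by ring
end

section
/- Let H be a complex Hilbert space and T : H → H a contraction. Then T is *-stable (i.e. (T*)ⁿ h → 0 in norm for every h ∈ H) if and only if there exist a complex Hilbert space E and a linear isometry V : H → ℓ²(ℕ, E) such that V ∘ T* = S* ∘ V, where S* is the left shift on ℓ²(ℕ, E), (S*f)ₙ = f_{n+1}. (Equivalently: T* is a restriction of the adjoint of a one-sided shift.) -/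
open ContinuousLinearMap Filter
open scoped ENNReal NNReal

set_option maxHeartbeats 1000000
set_option synthInstance.maxHeartbeats 1000000

universe u

section Aux

variable {H : Type u} [NormedAddCommGroup H] [InnerProductSpace ℂ H] [CompleteSpace H]

local notation "⟪" x ", " y "⟫" => @inner ℂ _ _ x y

lemma aux_norm_adjoint (T : H →L[ℂ] H) : ‖adjoint T‖ = ‖T‖ :=
  (ContinuousLinearMap.adjoint : (H →L[ℂ] H) ≃ₗᵢ⋆[ℂ] (H →L[ℂ] H)).norm_map T

lemma aux_re_inner_self (y : H) : (⟪y, y⟫).re = ‖y‖ ^ 2 := by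
  have h := inner_self_eq_norm_sq (𝕜 := ℂ) y
  rwa [RCLike.re_to_complex] at h

lemma aux_defect_nonneg (T : H →L[ℂ] H) (hT : ‖T‖ ≤ 1) :
    (0 : H →L[ℂ] H) ≤ 1 - T * adjoint T := by
  rw [ContinuousLinearMap.nonneg_iff_isPositive]
  constructor
  · rw [← ContinuousLinearMap.isSelfAdjoint_iff_isSymmetric, IsSelfAdjoint, star_sub, star_one, star_mul, star_eq_adjoint, star_eq_adjoint,
      adjoint_adjoint]
  · intro x
    have h1 : ⟪(1 - T * adjoint T) x, x⟫ = ⟪x, x⟫ - ⟪adjoint T x, adjoint T x⟫ := by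
      simp only [sub_apply, one_apply, mul_apply, inner_sub_left]
      congr 1
      have := adjoint_inner_left (adjoint T) x (adjoint T x)
      rwa [adjoint_adjoint] at this
    have h2 : ‖adjoint T x‖ ≤ ‖x‖ := by
      calc ‖adjoint T x‖ ≤ ‖adjoint T‖ * ‖x‖ := (adjoint T).le_opNorm x
        _ ≤ 1 * ‖x‖ := by gcongr; rw [aux_norm_adjoint]; exact hT
        _ = ‖x‖ := one_mul _
    have h3 : (⟪(1 - T * adjoint T) x, x⟫).re = ‖x‖ ^ 2 - ‖adjoint T x‖ ^ 2 := by
      rw [h1]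
      rw [show (⟪x, x⟫ - ⟪adjoint T x, adjoint T x⟫).re
          = (⟪x, x⟫).re - (⟪adjoint T x, adjoint T x⟫).re from Complex.sub_re _ _]
      rw [aux_re_inner_self, aux_re_inner_self]
    show (0 : ℝ) ≤ (⟪(1 - T * adjoint T) x, x⟫).re
    rw [h3]
    nlinarith [norm_nonneg (adjoint T x), norm_nonneg x]

lemma aux_sqrt_defect_norm_sq (T : H →L[ℂ] H) (hT : ‖T‖ ≤ 1) (x : H) :
    ‖CFC.sqrt (1 - T * adjoint T) x‖ ^ 2 = ‖x‖ ^ 2 - ‖adjoint T x‖ ^ 2 := by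
  set D := CFC.sqrt (1 - T * adjoint T) with hD
  have hnn : (0 : H →L[ℂ] H) ≤ D := CFC.sqrt_nonneg _
  have hsa : IsSelfAdjoint D := hnn.isSelfAdjoint
  have hDD : D * D = 1 - T * adjoint T := CFC.sqrt_mul_sqrt_self _ (aux_defect_nonneg T hT)
  have h1 : ⟪D x, D x⟫ = ⟪x, (1 - T * adjoint T) x⟫ := by
    have h := adjoint_inner_left D (D x) x
    rw [hsa.adjoint_eq] at h
    rw [h, show D (D x) = (D * D) x from rfl, hDD]
  have h2 : ⟪x, (1 - T * adjoint T) x⟫ = ⟪x, x⟫ - ⟪adjoint T x, adjoint T x⟫ := by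
    simp only [sub_apply, one_apply, mul_apply, inner_sub_right]
    congr 1
    have := adjoint_inner_right (adjoint T) x (adjoint T x)
    rwa [adjoint_adjoint] at this
  have : (⟪D x, D x⟫).re = ‖x‖ ^ 2 - ‖adjoint T x‖ ^ 2 := by
    rw [h1, h2, Complex.sub_re, aux_re_inner_self, aux_re_inner_self]
  rw [← this, aux_re_inner_self]

end Aux

/-- A contraction `T` on a complex Hilbert space is `*`-stable ((T*)ⁿ h → 0 for all h)
if and only if `T*` is a restriction of the adjoint of a one-sided shift: there are a
complex Hilbert space `E` and a linear isometry `V : H → ℓ²(ℕ, E)` with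
`V ∘ T* = S* ∘ V`, where `S*` is the left shift `(S*f)ₙ = f_{n+1}`. -/
theorem star_stable_iff_restriction_of_backward_shift
    {H : Type u} [NormedAddCommGroup H] [InnerProductSpace ℂ H] [CompleteSpace H]
    (T : H →L[ℂ] H) (hT : ‖T‖ ≤ 1) :
    (∀ h : H, Tendsto (fun n : ℕ => ((adjoint T) ^ n) h) atTop (nhds 0)) ↔
      ∃ (E : Type u) (_ : NormedAddCommGroup E) (_ : InnerProductSpace ℂ E)
        (_ : CompleteSpace E),
        ∃ V : H →ₗᵢ[ℂ] lp (fun _ : ℕ => E) 2,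
          ∀ (h : H) (n : ℕ), (V ((adjoint T) h)) n = (V h) (n + 1) := by
  have h2pos : (0 : ℝ) < (2 : ℝ≥0∞).toReal := by
    rw [ENNReal.toReal_ofNat]; norm_num
  constructor
  · -- forward direction
    intro hstab
    set Td := adjoint T with hTd
    set D := CFC.sqrt (1 - T * Td) with hD
    -- key telescoping identity
    have key : ∀ (h : H) (n : ℕ),
        ‖D ((Td ^ n) h)‖ ^ 2 = ‖(Td ^ n) h‖ ^ 2 - ‖(Td ^ (n + 1)) h‖ ^ 2 := by
      intro h n
      rw [aux_sqrt_defect_norm_sq T hT ((Td ^ n) h),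
        show Td ((Td ^ n) h) = (Td ^ (n + 1)) h by rw [pow_succ']; rfl]
    have partial_sum : ∀ (h : H) (N : ℕ),
        ∑ n ∈ Finset.range N, ‖D ((Td ^ n) h)‖ ^ 2 = ‖h‖ ^ 2 - ‖(Td ^ N) h‖ ^ 2 := by
      intro h N
      rw [Finset.sum_congr rfl fun n _ => key h n,
        Finset.sum_range_sub' (fun n => ‖(Td ^ n) h‖ ^ 2)]
      simp
    have hsum : ∀ h : H, Summable (fun n => ‖D ((Td ^ n) h)‖ ^ 2) := by
      intro h
      apply summable_of_sum_range_le (c := ‖h‖ ^ 2) (fun n => sq_nonneg _)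
      intro N
      rw [partial_sum h N]
      nlinarith [sq_nonneg ‖(Td ^ N) h‖]
    have hrpow : ∀ (g : ℕ → H),
        (fun n => ‖g n‖ ^ (2 : ℝ≥0∞).toReal) = fun n => ‖g n‖ ^ 2 := by
      intro g
      funext n
      rw [ENNReal.toReal_ofNat, ← Real.rpow_natCast]
      norm_num
    have hmem : ∀ h : H, Memℓp (fun n => D ((Td ^ n) h)) 2 := by
      intro h
      apply memℓp_gen
      rw [hrpow]
      exact hsum h
    have hhasSum : ∀ h : H, HasSum (fun n => ‖D ((Td ^ n) h)‖ ^ 2) (‖h‖ ^ 2) := by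
      intro h
      rw [(hsum h).hasSum_iff_tendsto_nat]
      rw [show (fun N => ∑ n ∈ Finset.range N, ‖D ((Td ^ n) h)‖ ^ 2)
          = fun N => ‖h‖ ^ 2 - ‖(Td ^ N) h‖ ^ 2 from funext fun N => partial_sum h N]
      have : Tendsto (fun N : ℕ => ‖(Td ^ N) h‖ ^ 2) atTop (nhds 0) := by
        simpa using ((hstab h).norm.pow 2)
      simpa using tendsto_const_nhds.sub this
    -- build the isometry
    refine ⟨H, inferInstance, inferInstance, inferInstance, ?_⟩
    refine ⟨⟨⟨⟨fun h => ⟨fun n => D ((Td ^ n) h), hmem h⟩, ?_⟩, ?_⟩, ?_⟩, ?_⟩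
    · intro x y
      apply lp.ext
      funext n
      rw [lp.coeFn_add]
      show D ((Td ^ n) (x + y)) = D ((Td ^ n) x) + D ((Td ^ n) y)
      rw [map_add, map_add]
    · intro c x
      apply lp.ext
      funext n
      rw [lp.coeFn_smul]
      show D ((Td ^ n) (c • x)) = c • D ((Td ^ n) x)
      rw [map_smul, map_smul]
    · intro h
      have hx : ‖(⟨fun n => D ((Td ^ n) h), hmem h⟩ : lp (fun _ : ℕ => H) 2)‖ ^ (2 : ℝ≥0∞).toReal
          = ∑' n, ‖D ((Td ^ n) h)‖ ^ (2 : ℝ≥0∞).toReal :=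
        lp.norm_rpow_eq_tsum h2pos _
      rw [hrpow] at hx
      have htsum : (∑' n, ‖D ((Td ^ n) h)‖ ^ 2) = ‖h‖ ^ 2 := (hhasSum h).tsum_eq
      have hsq : ‖(⟨fun n => D ((Td ^ n) h), hmem h⟩ : lp (fun _ : ℕ => H) 2)‖ ^ 2 = ‖h‖ ^ 2 := by
        rw [← htsum, ← hx, ENNReal.toReal_ofNat, ← Real.rpow_natCast]
        norm_num
      calc ‖(⟨fun n => D ((Td ^ n) h), hmem h⟩ : lp (fun _ : ℕ => H) 2)‖
          = Real.sqrt (‖(⟨fun n => D ((Td ^ n) h), hmem h⟩ : lp (fun _ : ℕ => H) 2)‖ ^ 2) :=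
            (Real.sqrt_sq (norm_nonneg _)).symm
        _ = Real.sqrt (‖h‖ ^ 2) := by rw [hsq]
        _ = ‖h‖ := Real.sqrt_sq (norm_nonneg _)
    · intro h n
      show D ((Td ^ n) (Td h)) = D ((Td ^ (n + 1)) h)
      rw [pow_succ]
      rfl
  · -- backward direction
    rintro ⟨E, _, _, _, V, hV⟩ h
    set Td := adjoint T with hTad
    have hiter : ∀ (n k : ℕ), (V ((Td ^ n) h)) k = (V h) (k + n) := by
      intro n
      induction n with
      | zero => simp
      | succ n ih =>
        intro k
        have h1 : (Td ^ (n + 1)) h = Td ((Td ^ n) h) := by rw [pow_succ']; rfl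
        have e : k + 1 + n = k + (n + 1) := by omega
        rw [h1, hV ((Td ^ n) h) k, ih (k + 1), e]
    have hnorm : ∀ n : ℕ, ‖(Td ^ n) h‖ ^ 2 = ∑' k, ‖(V h) (k + n)‖ ^ 2 := by
      intro n
      have h1 : ‖(Td ^ n) h‖ = ‖V ((Td ^ n) h)‖ := (V.norm_map _).symm
      have h2 : ‖V ((Td ^ n) h)‖ ^ (2 : ℝ≥0∞).toReal
          = ∑' k, ‖(V ((Td ^ n) h)) k‖ ^ (2 : ℝ≥0∞).toReal :=
        lp.norm_rpow_eq_tsum h2pos _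
      have h3 : (fun k => ‖(V ((Td ^ n) h)) k‖ ^ (2 : ℝ≥0∞).toReal)
          = fun k => ‖(V h) (k + n)‖ ^ 2 := by
        funext k
        rw [hiter n k, ENNReal.toReal_ofNat, ← Real.rpow_natCast]
        norm_num
      rw [h1, show ‖V ((Td ^ n) h)‖ ^ 2 = ‖V ((Td ^ n) h)‖ ^ (2 : ℝ≥0∞).toReal by
        rw [ENNReal.toReal_ofNat, ← Real.rpow_natCast]; norm_num, h2, h3]
    have htail : Tendsto (fun n : ℕ => ∑' k, ‖(V h) (k + n)‖ ^ 2) atTop (nhds 0) := by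
      simpa using tendsto_sum_nat_add (fun k => ‖(V h) k‖ ^ 2)
    have hsq : Tendsto (fun n : ℕ => ‖(Td ^ n) h‖ ^ 2) atTop (nhds 0) := by
      rw [show (fun n : ℕ => ‖(Td ^ n) h‖ ^ 2)
          = fun n : ℕ => ∑' k, ‖(V h) (k + n)‖ ^ 2 from funext hnorm]
      exact htail
    have hnormt : Tendsto (fun n : ℕ => ‖(Td ^ n) h‖) atTop (nhds 0) := by
      have h4 := hsq.sqrt
      rw [Real.sqrt_zero] at h4
      rw [show (fun n : ℕ => ‖(Td ^ n) h‖)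
          = fun n : ℕ => Real.sqrt (‖(Td ^ n) h‖ ^ 2) from
        funext fun n => (Real.sqrt_sq (norm_nonneg _)).symm]
      exact h4
    exact tendsto_zero_iff_norm_tendsto_zero.mpr hnormt
end
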